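/- arXiv:1904.07842 — 8 statements merged into one kernel-verified Lean document; each statement's English description precedes it below -/
import Mathlib

section
/- For 0 ≤ r ≤ (m−1)/2 and z = (z_0,...,z_r) ∈ F_{2^m}^{r+1} with z ≠ 0, the binary symmetric matrix P_{z,r} = A_{z_0} W + Σ_{i=1}^{r} [A_{z_i} W (R^i)^T + R^i W A_{z_i}^T] has rank at least m − 2r. -/
/-!
In the coordinates `v ↦ ∑ vᵢ αⁱ` the matrix `P_{z,r}` computes the form
`β(x, y) = Tr(z₀xy + ∑ zᵢ(x^{2^i} y + x y^{2^i}))`. The trace is invariant under Frobenius, so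
raising each term to a suitable power of `2` gives `β(x, y) = Tr(Q(x) y^{2^r})` for the linearized
polynomial `Q = ∑ zₖ^{2^r} X^{2^{r+k}} + ∑ zₖ^{2^{r-k}} X^{2^{r-k}}`, which is nonzero of degree at
most `2^{2r}` when `z ≠ 0`. Since the trace form is nondegenerate and `y ↦ y^{2^r}` is onto, the
left kernel of `P_{z,r}` lies in the roots of `Q`: it has at most `2^{2r}` elements, hence
dimension at most `2r`, and rank–nullity gives the bound.
-/

open Matrix Polynomial

theorem FiniteField.trace_pow_card_pow {K L : Type*} [Field K] [Fintype K] [Field L]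
    [Algebra K L] [Algebra.IsAlgebraic K L] (x : L) (k : ℕ) :
    Algebra.trace K L (x ^ Fintype.card K ^ k) = Algebra.trace K L x := by
  induction k with
  | zero => simp
  | succ k ih =>
    rw [pow_succ, pow_mul]
    exact (Algebra.trace_eq_of_algEquiv (frobeniusAlgEquivOfAlgebraic K L) _).trans ih

theorem Polynomial.natCard_le_natDegree_of_injective {R ι : Type*} [CommRing R] [IsDomain R]
    [Finite ι] {p : R[X]} (hp : p ≠ 0) {f : ι → R} (hf : Function.Injective f)
    (hroot : ∀ i, p.IsRoot (f i)) : Nat.card ι ≤ p.natDegree := by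
  have := Fintype.ofFinite ι
  rw [Nat.card_eq_fintype_card, ← Finset.card_univ, ← Finset.card_map ⟨f, hf⟩]
  refine card_le_degree_of_subset_roots fun x hx => ?_
  obtain ⟨i, -, rfl⟩ := Finset.mem_map.1 hx
  exact (mem_roots hp).2 (hroot i)

theorem Module.finrank_le_of_natCard_le_pow {K V : Type*} [Field K] [Finite K] [AddCommGroup V]
    [Module K V] [Module.Finite K V] {n : ℕ} (h : Nat.card V ≤ Nat.card K ^ n) :
    finrank K V ≤ n := by
  rw [Module.natCard_eq_pow_finrank (K := K)] at h
  exact (Nat.pow_le_pow_iff_right Finite.one_lt_card).1 h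

theorem Matrix.vecMul_transpose_dotProduct {m n K : Type*} [Fintype m] [Fintype n] [CommSemiring K]
    (M : Matrix m n K) (x : n → K) (u : m → K) : (x ᵥ* Mᵀ) ⬝ᵥ u = x ⬝ᵥ (u ᵥ* M) := by
  rw [vecMul_transpose, dotProduct_comm, dotProduct_mulVec, dotProduct_comm]

theorem Matrix.rank_add_finrank_ker_vecMulLinear {m n K : Type*} [Fintype m] [Fintype n]
    [Field K] (M : Matrix m n K) :
    M.rank + Module.finrank K (LinearMap.ker M.vecMulLinear) = Fintype.card m := by
  rw [← M.rank_transpose, Matrix.rank, mulVecLin_transpose,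
    LinearMap.finrank_range_add_finrank_ker, Module.finrank_fintype_fun_eq_card]

namespace DelsarteGoethals

section RadicalPoly

variable {F : Type*} [Field F] {r : ℕ}

noncomputable def radicalPoly (z : Fin (r + 1) → F) : F[X] :=
  ∑ k : Fin (r + 1), C (z k ^ 2 ^ r) * X ^ 2 ^ (r + k) +
    ∑ k : Fin r, C (z k.succ ^ 2 ^ (r - (k + 1))) * X ^ 2 ^ (r - (k + 1))

theorem natDegree_radicalPoly_le (z : Fin (r + 1) → F) :
    (radicalPoly z).natDegree ≤ 2 ^ (2 * r) := by
  have hterm : ∀ (a : F) (n : ℕ), n ≤ 2 * r → (C a * X ^ 2 ^ n).natDegree ≤ 2 ^ (2 * r) :=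
    fun a n hn => (natDegree_C_mul_X_pow_le a _).trans (Nat.pow_le_pow_right two_pos hn)
  refine (natDegree_add_le _ _).trans (max_le ?_ ?_) <;>
    refine natDegree_sum_le_of_forall_le _ _ fun k _ => hterm _ _ ?_ <;> omega

theorem coeff_radicalPoly_two_pow (z : Fin (r + 1) → F) (j : Fin (r + 1)) :
    (radicalPoly z).coeff (2 ^ (r + j)) = z j ^ 2 ^ r := by
  have hlow : ∀ k : Fin r, r + j ≠ r - (k + 1) := fun k => by omega
  simp only [radicalPoly, coeff_add, finsetSum_coeff, coeff_C_mul_X_pow,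
    Nat.pow_right_inj one_lt_two, Nat.add_left_cancel_iff, Fin.val_inj, hlow, if_false]
  simp

theorem radicalPoly_ne_zero {z : Fin (r + 1) → F} (hz : z ≠ 0) : radicalPoly z ≠ 0 := by
  obtain ⟨j, hj⟩ := Function.ne_iff.1 hz
  intro h
  have := coeff_radicalPoly_two_pow z j
  rw [h, coeff_zero] at this
  exact pow_ne_zero _ hj this.symm

end RadicalPoly

section Form

variable {F : Type*} [Field F] [Algebra (ZMod 2) F] {r : ℕ}

noncomputable def form (z : Fin (r + 1) → F) (x y : F) : ZMod 2 :=
  Algebra.trace (ZMod 2) F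
    (z 0 * x * y + ∑ i : Fin r, z i.succ * (x ^ 2 ^ (i + 1 : ℕ) * y + x * y ^ 2 ^ (i + 1 : ℕ)))

variable [Finite F]

theorem trace_pow_two_pow (a : F) (k : ℕ) :
    Algebra.trace (ZMod 2) F (a ^ 2 ^ k) = Algebra.trace (ZMod 2) F a := by
  simpa using FiniteField.trace_pow_card_pow (K := ZMod 2) a k

theorem form_eq_trace_radicalPoly_eval_mul (z : Fin (r + 1) → F) (x y : F) :
    form z x y = Algebra.trace (ZMod 2) F ((radicalPoly z).eval x * y ^ 2 ^ r) := by
  have hleft : ∀ (c : F) (k : ℕ), Algebra.trace (ZMod 2) F (c * (x ^ 2 ^ k * y)) =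
      Algebra.trace (ZMod 2) F (c ^ 2 ^ r * x ^ 2 ^ (r + k) * y ^ 2 ^ r) := fun c k => by
    rw [← trace_pow_two_pow _ r]
    ring_nf
  have hright : ∀ (c : F) (k : ℕ), k ≤ r → Algebra.trace (ZMod 2) F (c * (x * y ^ 2 ^ k)) =
      Algebra.trace (ZMod 2) F (c ^ 2 ^ (r - k) * x ^ 2 ^ (r - k) * y ^ 2 ^ r) := fun c k hk => by
    obtain ⟨s, rfl⟩ := Nat.exists_eq_add_of_le hk
    rw [← trace_pow_two_pow _ s, Nat.add_sub_cancel_left]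
    ring_nf
  simp only [form, radicalPoly, eval_add, eval_finsetSum, eval_mul, eval_C, eval_pow, eval_X,
    add_mul, Finset.sum_mul, map_add, map_sum, mul_add, Fin.sum_univ_succ, Finset.sum_add_distrib,
    Fin.val_zero, Fin.val_succ, add_assoc]
  congr 1
  · simpa [mul_assoc] using hleft (z 0) 0
  · congr 1
    · exact Finset.sum_congr rfl fun i _ => hleft _ _
    · exact Finset.sum_congr rfl fun i _ => hright _ _ i.2

theorem isRoot_radicalPoly_of_form_eq_zero {z : Fin (r + 1) → F} {x : F}
    (hx : ∀ y, form z x y = 0) : (radicalPoly z).IsRoot x := by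
  have hsurj : Function.Surjective fun y : F => y ^ 2 ^ r := by
    simpa [FiniteField.coe_frobeniusAlgEquivOfAlgebraic_iterate] using
      (FiniteField.frobeniusAlgEquivOfAlgebraic (ZMod 2) F).surjective.iterate r
  refine (traceForm_nondegenerate (ZMod 2) F).1 _ fun y => ?_
  obtain ⟨y, rfl⟩ := hsurj y
  rw [Algebra.traceForm_apply, ← form_eq_trace_radicalPoly_eval_mul, hx]

end Form

section Coordinates

variable {m r : ℕ} {F : Type*} [Field F] [Algebra (ZMod 2) F] {α : F}

noncomputable def ofCoeffs (α : F) (v : Fin m → ZMod 2) : F :=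
  ∑ i, v i • α ^ (i : ℕ)

def matrix (A : F → Matrix (Fin m) (Fin m) (ZMod 2)) (W R : Matrix (Fin m) (Fin m) (ZMod 2))
    (z : Fin (r + 1) → F) : Matrix (Fin m) (Fin m) (ZMod 2) :=
  A (z 0) * W + ∑ i : Fin r,
    (A (z i.succ) * W * (R ^ ((i : ℕ) + 1))ᵀ + R ^ ((i : ℕ) + 1) * W * (A (z i.succ))ᵀ)

theorem ofCoeffs_bijective (bas : Module.Basis (Fin m) (ZMod 2) F)
    (hbas : ∀ i : Fin m, bas i = α ^ (i : ℕ)) : Function.Bijective (ofCoeffs (m := m) α) := by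
  convert bas.equivFun.symm.bijective
  ext v
  simp [ofCoeffs, Module.Basis.equivFun_symm_apply, hbas]

theorem ofCoeffs_vecMul_pow {R : Matrix (Fin m) (Fin m) (ZMod 2)}
    (hR : ∀ v, ofCoeffs α (v ᵥ* R) = ofCoeffs α v ^ 2) (k : ℕ) (v : Fin m → ZMod 2) :
    ofCoeffs α (v ᵥ* R ^ k) = ofCoeffs α v ^ 2 ^ k := by
  induction k with
  | zero => rw [pow_zero, pow_zero, vecMul_one, pow_one]
  | succ k ih => rw [pow_succ, ← vecMul_vecMul, hR, ih, ← pow_mul, ← pow_succ]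

theorem vecMul_dotProduct_eq_trace {W : Matrix (Fin m) (Fin m) (ZMod 2)}
    (hW : ∀ i j, W i j = Algebra.trace (ZMod 2) F (α ^ (i : ℕ) * α ^ (j : ℕ)))
    (v u : Fin m → ZMod 2) :
    (v ᵥ* W) ⬝ᵥ u = Algebra.trace (ZMod 2) F (ofCoeffs α v * ofCoeffs α u) := by
  simp only [ofCoeffs, Finset.sum_mul, Finset.mul_sum, smul_mul_smul_comm, map_sum, map_smul,
    smul_eq_mul, dotProduct, vecMul, hW]
  exact Finset.sum_congr rfl fun j _ => Finset.sum_congr rfl fun i _ => by ring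

theorem vecMul_matrix_dotProduct {W R : Matrix (Fin m) (Fin m) (ZMod 2)}
    {A : F → Matrix (Fin m) (Fin m) (ZMod 2)}
    (hW : ∀ i j, W i j = Algebra.trace (ZMod 2) F (α ^ (i : ℕ) * α ^ (j : ℕ)))
    (hR : ∀ v, ofCoeffs α (v ᵥ* R) = ofCoeffs α v ^ 2)
    (hA : ∀ w v, ofCoeffs α (v ᵥ* A w) = ofCoeffs α v * w)
    (z : Fin (r + 1) → F) (v u : Fin m → ZMod 2) :
    (v ᵥ* matrix A W R z) ⬝ᵥ u = form z (ofCoeffs α v) (ofCoeffs α u) := by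
  simp only [matrix, form, vecMul_add, vecMul_sum, add_dotProduct, sum_dotProduct, map_add,
    map_sum, mul_add]
  congr 1
  · rw [← vecMul_vecMul, vecMul_dotProduct_eq_trace hW, hA]
    ring_nf
  · refine Finset.sum_congr rfl fun i _ => ?_
    rw [add_comm]
    congr 1 <;>
    · rw [← vecMul_vecMul, vecMul_transpose_dotProduct, ← vecMul_vecMul,
        vecMul_dotProduct_eq_trace hW, hA, ofCoeffs_vecMul_pow hR]
      ring_nf

theorem finrank_ker_vecMulLinear_matrix_le [Finite F] {W R : Matrix (Fin m) (Fin m) (ZMod 2)}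
    {A : F → Matrix (Fin m) (Fin m) (ZMod 2)}
    (hW : ∀ i j, W i j = Algebra.trace (ZMod 2) F (α ^ (i : ℕ) * α ^ (j : ℕ)))
    (hR : ∀ v, ofCoeffs α (v ᵥ* R) = ofCoeffs α v ^ 2)
    (hA : ∀ w v, ofCoeffs α (v ᵥ* A w) = ofCoeffs α v * w)
    (hbij : Function.Bijective (ofCoeffs (m := m) α)) {z : Fin (r + 1) → F} (hz : z ≠ 0) :
    Module.finrank (ZMod 2) (LinearMap.ker (matrix A W R z).vecMulLinear) ≤ 2 * r := by
  have hroot : ∀ v : LinearMap.ker (matrix A W R z).vecMulLinear,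
      (radicalPoly z).IsRoot (ofCoeffs α v.1) := by
    rintro ⟨v, hv⟩
    refine isRoot_radicalPoly_of_form_eq_zero fun y => ?_
    obtain ⟨u, rfl⟩ := hbij.2 y
    rw [← vecMul_matrix_dotProduct hW hR hA, ← vecMulLinear_apply, LinearMap.mem_ker.1 hv,
      zero_dotProduct]
  have hcard := natCard_le_natDegree_of_injective (radicalPoly_ne_zero hz)
    (hbij.1.comp Subtype.val_injective) hroot
  exact Module.finrank_le_of_natCard_le_pow <| by
    simpa using hcard.trans (natDegree_radicalPoly_le z)

end Coordinates

end DelsarteGoethals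

theorem delsarteGoethals_rank_lower_bound_general
    (m r : ℕ)
    (F : Type) [Field F] [Algebra (ZMod 2) F]
    (α : F) (bas : Module.Basis (Fin m) (ZMod 2) F)
    (hbas : ∀ i : Fin m, bas i = α ^ (i : ℕ))
    (W : Matrix (Fin m) (Fin m) (ZMod 2))
    (hW : ∀ i j, W i j = Algebra.trace (ZMod 2) F (α ^ (i : ℕ) * α ^ (j : ℕ)))
    (R : Matrix (Fin m) (Fin m) (ZMod 2))
    (hR : ∀ v : Fin m → ZMod 2,
      (∑ i, Matrix.vecMul v R i • α ^ (i : ℕ)) = (∑ i, v i • α ^ (i : ℕ)) ^ 2)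
    (A : F → Matrix (Fin m) (Fin m) (ZMod 2))
    (hA : ∀ (w : F) (v : Fin m → ZMod 2),
      (∑ i, Matrix.vecMul v (A w) i • α ^ (i : ℕ)) = (∑ i, v i • α ^ (i : ℕ)) * w)
    (z : Fin (r + 1) → F) (hz : z ≠ 0) :
    m - 2 * r ≤
      (A (z 0) * W + ∑ i : Fin r,
        (A (z i.succ) * W * (R ^ ((i : ℕ) + 1))ᵀ +
          R ^ ((i : ℕ) + 1) * W * (A (z i.succ))ᵀ)).rank := by
  have : Module.Finite (ZMod 2) F := .of_basis bas
  have : Finite F := Module.finite_of_finite (ZMod 2)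
  have hker := DelsarteGoethals.finrank_ker_vecMulLinear_matrix_le hW hR hA
    (DelsarteGoethals.ofCoeffs_bijective bas hbas) hz
  have hrank := (DelsarteGoethals.matrix A W R z).rank_add_finrank_ker_vecMulLinear
  rw [Fintype.card_fin] at hrank
  change m - 2 * r ≤ (DelsarteGoethals.matrix A W R z).rank
  omega

/-- For `0 ≤ r ≤ (m-1)/2` and nonzero `z ∈ F_{2^m}^{r+1}`, the Delsarte–Goethals
matrix `P_{z,r} = A_{z₀} W + Σ_{i=1}^r [A_{z_i} W (Rⁱ)ᵀ + Rⁱ W A_{z_i}ᵀ]`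
has rank at least `m - 2r`. -/
theorem delsarteGoethals_rank_lower_bound
    (m r : ℕ) (hm : 0 < m) (hr : r ≤ (m - 1) / 2)
    (F : Type) [Field F] [Algebra (ZMod 2) F]
    (α : F) (bas : Module.Basis (Fin m) (ZMod 2) F)
    (hbas : ∀ i : Fin m, bas i = α ^ (i : ℕ))
    (hα : ∀ x : F, x ≠ 0 → ∃ k : ℕ, x = α ^ k)
    (W : Matrix (Fin m) (Fin m) (ZMod 2))
    (hW : ∀ i j, W i j = Algebra.trace (ZMod 2) F (α ^ (i : ℕ) * α ^ (j : ℕ)))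
    (R : Matrix (Fin m) (Fin m) (ZMod 2))
    (hR : ∀ v : Fin m → ZMod 2,
      (∑ i, Matrix.vecMul v R i • α ^ (i : ℕ)) = (∑ i, v i • α ^ (i : ℕ)) ^ 2)
    (A : F → Matrix (Fin m) (Fin m) (ZMod 2))
    (hA : ∀ (w : F) (v : Fin m → ZMod 2),
      (∑ i, Matrix.vecMul v (A w) i • α ^ (i : ℕ)) = (∑ i, v i • α ^ (i : ℕ)) * w)
    (z : Fin (r + 1) → F) (hz : z ≠ 0) :
    m - 2 * r ≤
      (A (z 0) * W + ∑ i : Fin r,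
        (A (z i.succ) * W * (R ^ ((i : ℕ) + 1))ᵀ +
          R ^ ((i : ℕ) + 1) * W * (A (z i.succ))ᵀ)).rank :=
  delsarteGoethals_rank_lower_bound_general m r F α bas hbas W hW R hR A hA z hz
end

section
/- The Kerdock set P_K(m) = {A_z W : z ∈ F_{2^m}} is an m-dimensional F_2-vector space of symmetric m×m binary matrices in which every nonzero element is non-singular; in particular, for distinct z, z' ∈ F_{2^m}, the matrix A_z W + A_{z'} W is invertible. -/
/-!
With respect to a basis `b` of `F` over `𝔽₂`, `A_z` is the transpose of the left multiplication
matrix of `z` and `W` is the trace matrix of `b`, so `(A_z W) i j = Tr (z * b i * b j)`: this is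
symmetric and `𝔽₂`-linear in `z`. For `z ≠ 0` both factors are invertible, since multiplication
by `z` is, and the trace form of the separable extension `F / 𝔽₂` is nondegenerate. Hence
`z ↦ A_z W` is injective, and in characteristic `2` the sum `A_z W + A_z' W = A_(z + z') W` is
invertible for `z ≠ z'`.
-/

open Matrix

section

variable {K M ι : Type*} [CommRing K] [AddCommGroup M] [Module K M] [Fintype ι] [DecidableEq ι]

theorem Module.Basis.eq_transpose_toMatrix_of_forall_vecMul (b : Module.Basis ι K M)
    (f : M →ₗ[K] M) (A : Matrix ι ι K)
    (h : ∀ v : ι → K, ∑ i, (v ᵥ* A) i • b i = f (∑ i, v i • b i)) :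
    A = (LinearMap.toMatrix b b f)ᵀ := by
  ext i k
  have hrow : ∑ j, A i j • b j = f (b i) := by
    simpa [single_one_vecMul, Pi.single_apply] using h (Pi.single i 1)
  rw [transpose_apply, LinearMap.toMatrix_apply, ← hrow, b.repr_sum_self]

end

section

variable {K L ι : Type*} [CommRing K] [CommRing L] [Algebra K L] [Fintype ι] [DecidableEq ι]
  (b : Module.Basis ι K L)

theorem leftMulMatrix_transpose_mul_traceMatrix_apply (z : L) (i j : ι) :
    ((Algebra.leftMulMatrix b z)ᵀ * Algebra.traceMatrix K b) i j
      = Algebra.trace K L (z * b i * b j) := by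
  have hz : ∑ k, Algebra.leftMulMatrix b z k i • b k = z * b i := by
    simp only [Algebra.leftMulMatrix_eq_repr_mul, b.sum_repr]
  simp only [mul_apply, transpose_apply, Algebra.traceMatrix_apply, Algebra.traceForm_apply,
    ← hz, Finset.sum_mul, map_sum, smul_mul_assoc, LinearMap.map_smul, smul_eq_mul]

/-- `z ↦ P_z = A_z W`; the paper's `A_z` acts on row vectors, hence the transpose. -/
noncomputable def kerdockMap : L →ₗ[K] Matrix ι ι K where
  toFun z := (Algebra.leftMulMatrix b z)ᵀ * Algebra.traceMatrix K b
  map_add' z z' := by rw [map_add, transpose_add, add_mul]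
  map_smul' c z := by rw [map_smul, transpose_smul, smul_mul_assoc, RingHom.id_apply]

theorem kerdockMap_apply (z : L) :
    kerdockMap b z = (Algebra.leftMulMatrix b z)ᵀ * Algebra.traceMatrix K b :=
  rfl

theorem kerdockMap_isSymm (z : L) : (kerdockMap b z).IsSymm := by
  ext i j
  simp only [transpose_apply, kerdockMap_apply, leftMulMatrix_transpose_mul_traceMatrix_apply]
  ring_nf

end

section

variable {K L ι : Type*} [Field K] [Field L] [Algebra K L] [Fintype ι] [DecidableEq ι]
  (b : Module.Basis ι K L)

theorem isUnit_traceMatrix [Algebra.IsSeparable K L] : IsUnit (Algebra.traceMatrix K b) := by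
  have := b.finiteDimensional_of_finite
  rw [isUnit_iff_isUnit_det, ← Algebra.discr_def]
  exact (Algebra.discr_not_zero_of_basis K b).isUnit

theorem isUnit_kerdockMap [Algebra.IsSeparable K L] {z : L} (hz : z ≠ 0) :
    IsUnit (kerdockMap b z) :=
  ((isUnit_transpose _).mpr ((IsUnit.mk0 z hz).map (Algebra.leftMulMatrix b))).mul
    (isUnit_traceMatrix b)

theorem kerdockMap_injective [Algebra.IsSeparable K L] : Function.Injective (kerdockMap b) :=
  fun _ _ h ↦ Algebra.leftMulMatrix_injective b <| transpose_injective <|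
    (isUnit_traceMatrix b).mul_left_injective h

end

theorem kerdock_set_properties_general
    (m : ℕ) (F : Type) [Field F] [Algebra (ZMod 2) F]
    (α : F) (bas : Module.Basis (Fin m) (ZMod 2) F)
    (hbas : ∀ i : Fin m, bas i = α ^ (i : ℕ))
    (W : Matrix (Fin m) (Fin m) (ZMod 2))
    (hW : ∀ i j, W i j = Algebra.trace (ZMod 2) F (α ^ (i : ℕ) * α ^ (j : ℕ)))
    (A : F → Matrix (Fin m) (Fin m) (ZMod 2))
    (hA : ∀ (w : F) (v : Fin m → ZMod 2),
      (∑ i, Matrix.vecMul v (A w) i • α ^ (i : ℕ)) = (∑ i, v i • α ^ (i : ℕ)) * w) :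
    (∃ V : Submodule (ZMod 2) (Matrix (Fin m) (Fin m) (ZMod 2)),
        (V : Set (Matrix (Fin m) (Fin m) (ZMod 2))) = {M | ∃ z : F, M = A z * W} ∧
        Module.finrank (ZMod 2) V = m) ∧
    (∀ z : F, (A z * W).IsSymm) ∧
    (∀ M : Matrix (Fin m) (Fin m) (ZMod 2),
        (∃ z : F, M = A z * W) → M ≠ 0 → IsUnit M) ∧
    (∀ z z' : F, z ≠ z' → IsUnit (A z * W + A z' * W)) := by
  have : FiniteDimensional (ZMod 2) F := bas.finiteDimensional_of_finite
  have : CharP F 2 := charP_of_injective_algebraMap (algebraMap (ZMod 2) F).injective 2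
  have hW' : W = Algebra.traceMatrix (ZMod 2) bas := by
    ext i j
    rw [hW, Algebra.traceMatrix_apply, Algebra.traceForm_apply, hbas, hbas]
  have hAW : ∀ z, A z * W = kerdockMap bas z := by
    intro z
    rw [hW', bas.eq_transpose_toMatrix_of_forall_vecMul (LinearMap.mulLeft _ z) (A z),
      Algebra.toMatrix_lmul_eq, kerdockMap_apply]
    intro v
    simpa only [hbas, LinearMap.mulLeft_apply, mul_comm z] using hA z v
  simp only [hAW, ← map_add]
  refine ⟨⟨LinearMap.range (kerdockMap bas), ?_, ?_⟩, kerdockMap_isSymm bas, ?_, ?_⟩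
  · ext M
    simp [eq_comm]
  · rw [LinearMap.finrank_range_of_inj (kerdockMap_injective bas),
      Module.finrank_eq_card_basis bas, Fintype.card_fin]
  · rintro M ⟨z, rfl⟩ hM
    exact isUnit_kerdockMap bas (by rintro rfl; exact hM (map_zero _))
  · intro z z' hne
    exact isUnit_kerdockMap bas (by rwa [← CharTwo.sub_eq_add, sub_ne_zero])

/-- The Kerdock set `P_K(m) = {A_z W : z ∈ F_{2^m}}` is an `m`-dimensional
`F_2`-vector space of symmetric matrices whose nonzero elements are
non-singular; in particular sums of distinct elements are invertible. -/
theorem kerdock_set_properties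
    (m : ℕ) (hm : 0 < m) (F : Type) [Field F] [Algebra (ZMod 2) F]
    (α : F) (bas : Module.Basis (Fin m) (ZMod 2) F)
    (hbas : ∀ i : Fin m, bas i = α ^ (i : ℕ))
    (hα : ∀ x : F, x ≠ 0 → ∃ k : ℕ, x = α ^ k)
    (W : Matrix (Fin m) (Fin m) (ZMod 2))
    (hW : ∀ i j, W i j = Algebra.trace (ZMod 2) F (α ^ (i : ℕ) * α ^ (j : ℕ)))
    (A : F → Matrix (Fin m) (Fin m) (ZMod 2))
    (hA : ∀ (w : F) (v : Fin m → ZMod 2),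
      (∑ i, Matrix.vecMul v (A w) i • α ^ (i : ℕ)) = (∑ i, v i • α ^ (i : ℕ)) * w) :
    (∃ V : Submodule (ZMod 2) (Matrix (Fin m) (Fin m) (ZMod 2)),
        (V : Set (Matrix (Fin m) (Fin m) (ZMod 2))) = {M | ∃ z : F, M = A z * W} ∧
        Module.finrank (ZMod 2) V = m) ∧
    (∀ z : F, (A z * W).IsSymm) ∧
    (∀ M : Matrix (Fin m) (Fin m) (ZMod 2),
        (∃ z : F, M = A z * W) → M ≠ 0 → IsUnit M) ∧
    (∀ z z' : F, z ≠ z' → IsUnit (A z * W + A z' * W)) :=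
  kerdock_set_properties_general m F α bas hbas W hW A hA
end

section
/- Let P be a binary symmetric m×m matrix and w ∈ F_2^m. The vector v = (i^{x P x^T + 2 w x^T})_{x ∈ F_2^m} ∈ C^{2^m} (entries indexed by x, exponents computed as integers mod 4) is a common eigenvector of all the 2^m commuting Pauli operators E(a, aP), a ∈ F_2^m, with eigenvalues ±1. -/
open Matrix BigOperators

/-- The m-qubit Pauli operator `D(a,b) = X^{a_1}Z^{b_1} ⊗ ⋯ ⊗ X^{a_m}Z^{b_m}`. -/
noncomputable def PauliD (m : ℕ) (a b : Fin m → ZMod 2) :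
    Matrix (Fin m → ZMod 2) (Fin m → ZMod 2) ℂ :=
  Matrix.of fun y x =>
    ∏ i, (if y i = x i + a i then ((-1 : ℂ)) ^ ((b i).val * (x i).val) else 0)

/-- The Hermitian Pauli operator `E(a,b) = i^{a·bᵀ} D(a,b)`. -/
noncomputable def PauliE (m : ℕ) (a b : Fin m → ZMod 2) :
    Matrix (Fin m → ZMod 2) (Fin m → ZMod 2) ℂ :=
  (Complex.I ^ (∑ i, (a i).val * (b i).val)) • PauliD m a b

/-!
Lift the coordinates of binary vectors to `ZMod 4` along the representatives `0, 1`. The lift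
is additive up to `2 * (product)` terms, so for symmetric `P` the exponent
`q(x) = x P xᵀ + 2 w xᵀ` satisfies `q(x + a) = q(x) + q(a) + 2 x P aᵀ` in `ZMod 4`.
The operator `E(a, aP)` sends `v` to `y ↦ i^{a·aP} (-1)^{aP·(y+a)} v(y + a)`, and the sign
`(-1)^{aP·y} = i^{2 a P yᵀ}` cancels the cross term, leaving the constant `i^{a·aP - q(a)}`.
Its square is `1` because `a·aP ≡ a P aᵀ (mod 2)`. Commutation holds because
`D(a, b)` and `D(a', b')` commute as soon as `b·a' = b'·a`, which symmetry of `P` gives.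
-/

lemma Matrix.IsSymm.dotProduct_mulVec_comm {ι R : Type*} [Fintype ι] [CommSemiring R]
    {p : Matrix ι ι R} (hp : p.IsSymm) (u v : ι → R) : u ⬝ᵥ p *ᵥ v = v ⬝ᵥ p *ᵥ u := by
  rw [dotProduct_mulVec, dotProduct_comm, ← mulVec_transpose, hp.eq]

lemma neg_one_pow_sum_val_mul_val {ι : Type*} [Fintype ι] (b x : ι → ZMod 2) :
    (-1 : ℂ) ^ (∑ i, (b i).val * (x i).val) = (-1) ^ (b ⬝ᵥ x).val := by
  rw [neg_one_pow_eq_pow_mod_two, ← ZMod.val_natCast]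
  push_cast
  simp [dotProduct]

lemma neg_one_pow_val_add (u v : ZMod 2) :
    (-1 : ℂ) ^ (u + v).val = (-1) ^ u.val * (-1) ^ v.val := by
  rw [ZMod.val_add, ← neg_one_pow_eq_pow_mod_two, pow_add]

section Pauli

variable {m : ℕ}

lemma PauliD_apply (a b y x : Fin m → ZMod 2) :
    PauliD m a b y x = if y = x + a then (-1) ^ (b ⬝ᵥ x).val else 0 := by
  simp only [PauliD, of_apply, Finset.prod_ite_zero, Finset.prod_pow_eq_pow_sum,
    neg_one_pow_sum_val_mul_val, funext_iff, Pi.add_apply, Finset.mem_univ, true_imp_iff]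

lemma PauliD_mulVec (a b : Fin m → ZMod 2) (f : (Fin m → ZMod 2) → ℂ) :
    PauliD m a b *ᵥ f = fun y => (-1) ^ (b ⬝ᵥ (y + a)).val * f (y + a) := by
  ext y
  have hcond : ∀ x, y = x + a ↔ x = y + a := fun x => by
    constructor <;> rintro rfl <;> ext i <;> simp [add_assoc, CharTwo.add_self_eq_zero]
  simp only [mulVec, dotProduct, PauliD_apply, hcond, ite_mul, zero_mul, Finset.sum_ite_eq',
    Finset.mem_univ, if_true]

lemma PauliD_commute {a b a' b' : Fin m → ZMod 2} (h : b ⬝ᵥ a' = b' ⬝ᵥ a) :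
    Commute (PauliD m a b) (PauliD m a' b') := by
  refine ext_iff_mulVec.mpr fun f => ?_
  ext y
  simp only [← mulVec_mulVec, PauliD_mulVec, add_right_comm y a' a, ← mul_assoc,
    ← neg_one_pow_val_add]
  congr 3
  simp only [dotProduct_add]
  linear_combination -h

lemma PauliE_commute {a b a' b' : Fin m → ZMod 2} (h : b ⬝ᵥ a' = b' ⬝ᵥ a) :
    Commute (PauliE m a b) (PauliE m a' b') :=
  ((PauliD_commute h).smul_left _).smul_right _

end Pauli

section Lift

variable {ι : Type*} [Fintype ι]

def lift4 (u : ZMod 2) : ZMod 4 := u.val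

lemma lift4_add (u v : ZMod 2) :
    lift4 (u + v) = lift4 u + lift4 v + 2 * (lift4 u * lift4 v) := by
  revert u v; decide

lemma two_mul_lift4_add (u v : ZMod 2) : 2 * lift4 (u + v) = 2 * lift4 u + 2 * lift4 v := by
  revert u v; decide

lemma cast_lift4 (u : ZMod 2) : ((lift4 u).cast : ZMod 2) = u := by
  revert u; decide

-- `2 * z` only depends on `z` mod 2: this transports identities mod 2 to doubled ones mod 4.
lemma two_mul_lift4_castHom (z : ZMod 4) :
    2 * lift4 (ZMod.castHom (by norm_num : 2 ∣ 4) (ZMod 2) z) = 2 * z := by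
  revert z; decide

lemma two_mul_lift4_dotProduct (x y : ι → ZMod 2) :
    2 * lift4 (x ⬝ᵥ y) = 2 * (lift4 ∘ x ⬝ᵥ lift4 ∘ y) := by
  rw [← two_mul_lift4_castHom (_ ⬝ᵥ _), RingHom.map_dotProduct]
  congr 3 <;> ext i <;> simp [cast_lift4]

lemma two_mul_lift4_dotProduct_mulVec (P : Matrix ι ι (ZMod 2)) (x y : ι → ZMod 2) :
    2 * lift4 (x ⬝ᵥ P *ᵥ y) = 2 * (lift4 ∘ x ⬝ᵥ P.map lift4 *ᵥ lift4 ∘ y) := by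
  rw [← two_mul_lift4_castHom (_ ⬝ᵥ _), RingHom.map_dotProduct]
  congr 3
  · ext i; simp [cast_lift4]
  · ext i
    rw [Function.comp_apply, RingHom.map_mulVec]
    congr 2 <;> ext <;> simp [cast_lift4]

def quadPhase (P : Matrix ι ι (ZMod 2)) (w x : ι → ZMod 2) : ZMod 4 :=
  lift4 ∘ x ⬝ᵥ P.map lift4 *ᵥ lift4 ∘ x + 2 * (lift4 ∘ w ⬝ᵥ lift4 ∘ x)

lemma quadPhase_add {P : Matrix ι ι (ZMod 2)} (hP : P.IsSymm) (w x y : ι → ZMod 2) :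
    quadPhase P w (x + y) =
      quadPhase P w x + quadPhase P w y + 2 * (lift4 ∘ x ⬝ᵥ P.map lift4 *ᵥ lift4 ∘ y) := by
  set p := P.map lift4
  set d := lift4 ∘ x * lift4 ∘ y
  have hp : p.IsSymm := hP.map _
  have hxy : lift4 ∘ (x + y) = lift4 ∘ x + lift4 ∘ y + (2 : ZMod 4) • d := by
    ext i; simp [d, lift4_add]
  have h4 : (4 : ZMod 4) = 0 := rfl
  simp only [quadPhase, hxy, add_dotProduct, dotProduct_add, mulVec_add, mulVec_smul,
    smul_dotProduct, dotProduct_smul, smul_eq_mul]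
  rw [hp.dotProduct_mulVec_comm (lift4 ∘ y), hp.dotProduct_mulVec_comm d (lift4 ∘ x),
    hp.dotProduct_mulVec_comm d (lift4 ∘ y)]
  linear_combination (lift4 ∘ x ⬝ᵥ p *ᵥ d + lift4 ∘ y ⬝ᵥ p *ᵥ d + d ⬝ᵥ p *ᵥ d
    + lift4 ∘ w ⬝ᵥ d) * h4

def eigenPhase (P : Matrix ι ι (ZMod 2)) (w a : ι → ZMod 2) : ZMod 4 :=
  lift4 ∘ a ⬝ᵥ lift4 ∘ (a ᵥ* P) - quadPhase P w a

lemma two_mul_eigenPhase (P : Matrix ι ι (ZMod 2)) (w a : ι → ZMod 2) :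
    2 * eigenPhase P w a = 0 := by
  have h4 : (4 : ZMod 4) = 0 := rfl
  rw [eigenPhase, mul_sub, ← two_mul_lift4_dotProduct, dotProduct_comm, ← dotProduct_mulVec,
    two_mul_lift4_dotProduct_mulVec, quadPhase]
  linear_combination (-(lift4 ∘ w ⬝ᵥ lift4 ∘ a)) * h4

end Lift

section Character

noncomputable def iChar : AddChar (ZMod 4) ℂ := AddChar.zmodChar 4 Complex.I_pow_four

lemma iChar_natCast (n : ℕ) : iChar n = Complex.I ^ n := AddChar.zmodChar_apply' _ n

lemma iChar_eq_one_or_neg_one {z : ZMod 4} (hz : 2 * z = 0) : iChar z = 1 ∨ iChar z = -1 := by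
  rw [← sq_eq_one_iff, ← AddChar.map_nsmul_eq_pow, nsmul_eq_mul, Nat.cast_ofNat, hz,
    AddChar.map_zero_eq_one]

lemma neg_one_pow_val_eq_iChar (u : ZMod 2) : (-1 : ℂ) ^ u.val = iChar (2 * lift4 u) := by
  rw [show 2 * lift4 u = ((2 * u.val : ℕ) : ZMod 4) by simp [lift4], iChar_natCast, pow_mul,
    Complex.I_sq]

variable {ι : Type*} [Fintype ι]

lemma I_pow_sum_val_mul_val (x y : ι → ZMod 2) :
    Complex.I ^ (∑ i, (x i).val * (y i).val) = iChar (lift4 ∘ x ⬝ᵥ lift4 ∘ y) := by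
  rw [← iChar_natCast]
  push_cast
  rfl

lemma I_pow_eq_iChar_quadPhase (P : Matrix ι ι (ZMod 2)) (w x : ι → ZMod 2) :
    Complex.I ^ ((∑ i, ∑ j, (x i).val * (P i j).val * (x j).val) +
      2 * ∑ i, (w i).val * (x i).val) = iChar (quadPhase P w x) := by
  rw [← iChar_natCast]
  push_cast
  simp [quadPhase, dotProduct, mulVec, lift4, Finset.mul_sum, mul_assoc]

end Character

lemma PauliE_mulVec_iChar_quadPhase {m : ℕ} {P : Matrix (Fin m) (Fin m) (ZMod 2)}
    (hP : P.IsSymm) (w a : Fin m → ZMod 2) :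
    PauliE m a (a ᵥ* P) *ᵥ (fun x => iChar (quadPhase P w x)) =
      iChar (eigenPhase P w a) • fun x => iChar (quadPhase P w x) := by
  ext y
  rw [PauliE, smul_mulVec, PauliD_mulVec]
  simp only [Pi.smul_apply, smul_eq_mul, I_pow_sum_val_mul_val, neg_one_pow_val_eq_iChar,
    ← AddChar.map_add_eq_mul]
  congr 1
  rw [eigenPhase, quadPhase_add hP, ← dotProduct_mulVec, mulVec_add, dotProduct_add,
    two_mul_lift4_add, two_mul_lift4_dotProduct_mulVec, two_mul_lift4_dotProduct_mulVec,
    (hP.map lift4).dotProduct_mulVec_comm (lift4 ∘ y)]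
  have h4 : (4 : ZMod 4) = 0 := rfl
  simp only [quadPhase]
  linear_combination (lift4 ∘ a ⬝ᵥ P.map lift4 *ᵥ lift4 ∘ a
    + lift4 ∘ a ⬝ᵥ P.map lift4 *ᵥ lift4 ∘ y + lift4 ∘ w ⬝ᵥ lift4 ∘ a) * h4

/-- For a binary symmetric matrix `P` and `w ∈ F_2^m`, the vector
`v = (i^{xPxᵀ + 2wxᵀ})_x` is a common eigenvector, with eigenvalues `±1`, of
the `2^m` commuting Pauli operators `E(a, aP)`. -/
theorem quaternary_phase_vector_is_common_eigenvector
    (m : ℕ) (P : Matrix (Fin m) (Fin m) (ZMod 2)) (hP : P.IsSymm)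
    (w : Fin m → ZMod 2) (v : (Fin m → ZMod 2) → ℂ)
    (hv : v = fun x => Complex.I ^
      ((∑ i, ∑ j, (x i).val * (P i j).val * (x j).val) +
        2 * ∑ i, (w i).val * (x i).val)) :
    (∀ a a' : Fin m → ZMod 2,
        PauliE m a (Matrix.vecMul a P) * PauliE m a' (Matrix.vecMul a' P) =
          PauliE m a' (Matrix.vecMul a' P) * PauliE m a (Matrix.vecMul a P)) ∧
    (∀ a : Fin m → ZMod 2, ∃ ε : ℂ, (ε = 1 ∨ ε = -1) ∧
        (PauliE m a (Matrix.vecMul a P)).mulVec v = ε • v) := by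
  have hv' : v = fun x => iChar (quadPhase P w x) :=
    hv.trans (funext fun x => I_pow_eq_iChar_quadPhase P w x)
  refine ⟨fun a a' => (PauliE_commute ?_).eq,
    fun a => ⟨iChar (eigenPhase P w a), ?_, ?_⟩⟩
  · rw [← dotProduct_mulVec, ← dotProduct_mulVec, hP.dotProduct_mulVec_comm]
  · exact iChar_eq_one_or_neg_one (two_mul_eigenPhase P w a)
  · rw [hv', PauliE_mulVec_iChar_quadPhase hP]
end

section
/- Let P_1, P_2 be binary symmetric m×m matrices with rank(P_1 + P_2) = k, and let u = (i^{xP_1x^T + 2w_1x^T})_x, v = (i^{xP_2x^T + 2w_2x^T})_x be unnormalized common eigenvectors as above. Then for fixed v, as u runs over the 2^m eigenvectors associated with P_1, the squared Hermitian inner product |⟨u,v⟩|^2 equals 2^{2m−k} for exactly 2^k choices of u, and 0 for the remaining 2^m − 2^k choices. -/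
/-!
Lift `x P xᵀ` to `ZMod 4` through the representatives `0, 1`. For symmetric `P` this quadratic
phase polarizes as `Q(x + y) = Q x + Q y + 2 x P yᵀ`, so the exponent `f` of `conj u · v`
polarizes with the bilinear form `2 x (P₁ + P₂) yᵀ`. Expanding `|Σₓ i^{f x}|²` and substituting
`x = y + z`, the sum over `y` of `(-1)^{y (P₁ + P₂) zᵀ}` keeps only `z ∈ ker (P₁ + P₂)`, on which
`i^f` is a character; hence `|⟨u, v⟩|²` is `2^m · 2^(m-k)` or `0`. As `u` varies, `⟨u, v⟩` is the
Walsh–Hadamard transform of a unimodular function, so Parseval gives `Σ_w |⟨u_w, v⟩|² = 2^(2m)`,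
which forces exactly `2^k` nonzero values.
-/

open Matrix BigOperators Finset

theorem dotProduct_mulVec_add_self {ι R : Type*} [Fintype ι] [CommRing R] {L : Matrix ι ι R}
    (hL : L.IsSymm) (a b : ι → R) :
    (a + b) ⬝ᵥ L *ᵥ (a + b) = a ⬝ᵥ L *ᵥ a + b ⬝ᵥ L *ᵥ b + 2 * (a ⬝ᵥ L *ᵥ b) := by
  have hba : b ⬝ᵥ L *ᵥ a = a ⬝ᵥ L *ᵥ b := by
    rw [dotProduct_mulVec, ← mulVec_transpose, hL.eq, dotProduct_comm]
  simp only [mulVec_add, dotProduct_add, add_dotProduct, hba]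
  ring

theorem natCard_mul_eq_sum_of_forall_eq_zero_or {α : Type*} [Fintype α] {g : α → ℝ} {a : ℝ}
    (ha : a ≠ 0) (hg : ∀ x, g x = 0 ∨ g x = a) : Nat.card {x // g x = a} * a = ∑ x, g x := by
  classical
  rw [Nat.card_eq_fintype_card, Fintype.card_subtype, ← nsmul_eq_mul, ← Finset.sum_const,
    Finset.sum_filter]
  refine Finset.sum_congr rfl fun x _ => ?_
  rcases hg x with h | h <;> simp [h, ha.symm]

theorem natCard_zero_eq_sub_of_forall_eq_zero_or {α : Type*} [Fintype α] {g : α → ℝ} {a : ℝ}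
    (ha : a ≠ 0) (hg : ∀ x, g x = 0 ∨ g x = a) :
    Nat.card {x // g x = 0} = Nat.card α - Nat.card {x // g x = a} := by
  classical
  have hcompl : ∀ x, g x = 0 ↔ ¬ g x = a := fun x => by
    rcases hg x with h | h <;> simp [h, ha, ha.symm]
  simp only [Nat.card_congr (Equiv.subtypeEquivRight hcompl), Nat.card_eq_fintype_card,
    Fintype.card_subtype_compl]

namespace PauliEigenbasis

def lift (t : ZMod 2) : ZMod 4 := t.val

def twice (t : ZMod 2) : ZMod 4 := 2 * lift t

def reduce : ZMod 4 →+* ZMod 2 := ZMod.castHom (by norm_num) (ZMod 2)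

theorem reduce_lift (t : ZMod 2) : reduce (lift t) = t := by revert t; decide

theorem lift_add (s t : ZMod 2) : lift (s + t) = lift s + lift t + 2 * (lift s * lift t) := by
  revert s t; decide

theorem two_mul_eq_twice_reduce (s : ZMod 4) : 2 * s = twice (reduce s) := by revert s; decide

theorem twice_add (s t : ZMod 2) : twice (s + t) = twice s + twice t := by revert s t; decide

@[simp] theorem twice_zero : twice 0 = 0 := rfl

theorem neg_twice (t : ZMod 2) : -twice t = twice t := by revert t; decide

def iChar : AddChar (ZMod 4) ℂ := AddChar.zmodChar 4 Complex.I_pow_four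

theorem iChar_natCast (n : ℕ) : iChar n = Complex.I ^ n := AddChar.zmodChar_apply' _ n

theorem iChar_twice_one : iChar (twice 1) = -1 := by
  rw [show twice 1 = ((2 : ℕ) : ZMod 4) from rfl, iChar_natCast, Complex.I_sq]

variable {ι : Type*} [Fintype ι]

def quadPhase (P : Matrix ι ι (ZMod 2)) (x : ι → ZMod 2) : ZMod 4 :=
  (lift ∘ x) ⬝ᵥ P.map lift *ᵥ (lift ∘ x)

theorem reduce_dotProduct_mulVec (P : Matrix ι ι (ZMod 2)) (x y : ι → ZMod 2) :
    reduce ((lift ∘ x) ⬝ᵥ P.map lift *ᵥ (lift ∘ y)) = x ⬝ᵥ P *ᵥ y := by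
  simp [dotProduct, mulVec, reduce_lift]

theorem quadPhase_add {P : Matrix ι ι (ZMod 2)} (hP : P.IsSymm) (x y : ι → ZMod 2) :
    quadPhase P (x + y) = quadPhase P x + quadPhase P y + twice (x ⬝ᵥ P *ᵥ y) := by
  have hL : (P.map lift).IsSymm := hP.map lift
  have hlift : lift ∘ (x + y) = (lift ∘ x + lift ∘ y) + 2 • (lift ∘ x * lift ∘ y) := by
    funext i
    simp [lift_add, two_smul, two_mul]
  have heven (a w : ι → ZMod 4) :
      (a + 2 • w) ⬝ᵥ P.map lift *ᵥ (a + 2 • w) = a ⬝ᵥ P.map lift *ᵥ a := by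
    rw [dotProduct_mulVec_add_self hL, mulVec_smul, dotProduct_smul, smul_dotProduct,
      dotProduct_smul]
    have four : (4 : ZMod 4) = 0 := rfl
    linear_combination (w ⬝ᵥ P.map lift *ᵥ w + a ⬝ᵥ P.map lift *ᵥ w) * four
  rw [quadPhase, hlift, heven, dotProduct_mulVec_add_self hL, two_mul_eq_twice_reduce,
    reduce_dotProduct_mulVec]
  rfl

def walshChar (a : ι → ZMod 2) : AddChar (ι → ZMod 2) ℂ where
  toFun y := iChar (twice (a ⬝ᵥ y))
  map_zero_eq_one' := by simp
  map_add_eq_mul' y z := by rw [dotProduct_add, twice_add, AddChar.map_add_eq_mul]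

theorem walshChar_apply (a y : ι → ZMod 2) : walshChar a y = iChar (twice (a ⬝ᵥ y)) := rfl

theorem walshChar_comm (a y : ι → ZMod 2) : walshChar a y = walshChar y a := by
  rw [walshChar_apply, walshChar_apply, dotProduct_comm]

theorem conj_walshChar (a y : ι → ZMod 2) :
    (starRingEnd ℂ) (walshChar a y) = walshChar a y := by
  rw [← AddChar.map_neg_eq_conj, ZModModule.neg_eq_self]

section QuadraticSum

variable {A : Matrix ι ι (ZMod 2)} {f : (ι → ZMod 2) → ZMod 4}

theorem map_zero_of_polar (hf : ∀ x y, f (x + y) = f x + f y + twice (x ⬝ᵥ A *ᵥ y)) :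
    f 0 = 0 := by
  simpa using hf 0 0

def kerChar (hf : ∀ x y, f (x + y) = f x + f y + twice (x ⬝ᵥ A *ᵥ y)) :
    AddChar (LinearMap.ker A.mulVecLin) ℂ where
  toFun z := iChar (f z)
  map_zero_eq_one' := by simp [map_zero_of_polar hf]
  map_add_eq_mul' z z' := by
    have hz' : A *ᵥ (z' : ι → ZMod 2) = 0 := z'.2
    simp [hf, hz', AddChar.map_add_eq_mul]

theorem natCard_ker_mulVecLin (A : Matrix ι ι (ZMod 2)) :
    Nat.card (LinearMap.ker A.mulVecLin) = 2 ^ (Fintype.card ι - A.rank) := by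
  have hrank := LinearMap.finrank_range_add_finrank_ker A.mulVecLin
  rw [Module.finrank_fintype_fun_eq_card] at hrank
  rw [Module.natCard_eq_pow_finrank (K := ZMod 2), Nat.card_zmod, Matrix.rank]
  congr 1
  omega

end QuadraticSum

def eigenvector (P : Matrix ι ι (ZMod 2)) (w x : ι → ZMod 2) : ℂ :=
  iChar (quadPhase P x + twice (w ⬝ᵥ x))

theorem I_pow_eq_eigenvector (P : Matrix ι ι (ZMod 2)) (w x : ι → ZMod 2) :
    Complex.I ^ ((∑ i, ∑ j, (x i).val * (P i j).val * (x j).val) +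
      2 * ∑ i, (w i).val * (x i).val) = eigenvector P w x := by
  rw [eigenvector, ← iChar_natCast, Nat.cast_add, Nat.cast_mul, Nat.cast_ofNat,
    two_mul_eq_twice_reduce, map_natCast]
  congr 2
  · simp [quadPhase, dotProduct, mulVec, lift, Finset.mul_sum, mul_assoc]
  · push_cast [ZMod.natCast_val, ZMod.cast_id]
    rfl

theorem eigenvector_eq_mul_walshChar (P : Matrix ι ι (ZMod 2)) (w x : ι → ZMod 2) :
    eigenvector P w x = iChar (quadPhase P x) * walshChar w x :=
  AddChar.map_add_eq_mul _ _ _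

theorem conj_eigenvector_mul_eigenvector (P₁ P₂ : Matrix ι ι (ZMod 2)) (w₁ w₂ x : ι → ZMod 2) :
    (starRingEnd ℂ) (eigenvector P₁ w₁ x) * eigenvector P₂ w₂ x =
      iChar ((quadPhase P₂ x + twice (w₂ ⬝ᵥ x)) - (quadPhase P₁ x + twice (w₁ ⬝ᵥ x))) := by
  rw [eigenvector, eigenvector, ← AddChar.map_neg_eq_conj, ← AddChar.map_add_eq_mul,
    sub_eq_neg_add]

variable [DecidableEq ι]

theorem walshChar_eq_zero_iff (a : ι → ZMod 2) : walshChar a = 0 ↔ a = 0 := by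
  refine ⟨fun h => ?_, fun h => by ext y; simp [h, walshChar_apply]⟩
  by_contra ha
  obtain ⟨i, hi⟩ := Function.ne_iff.mp ha
  have hai : a i = 1 := Fin.eq_one_of_ne_zero (a i) hi
  have := DFunLike.congr_fun h (Pi.single i 1)
  rw [walshChar_apply, dotProduct_single, hai, mul_one,
    iChar_twice_one, AddChar.zero_apply] at this
  norm_num at this

theorem sum_walshChar (a : ι → ZMod 2) :
    ∑ y, walshChar a y = if a = 0 then (Fintype.card (ι → ZMod 2) : ℂ) else 0 := by
  rw [AddChar.sum_eq_ite]
  simp only [walshChar_eq_zero_iff]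

theorem sum_sq_norm_sum_walshChar_mul (φ : (ι → ZMod 2) → ℂ) :
    ∑ w, ‖∑ x, walshChar w x * φ x‖ ^ 2 = Fintype.card (ι → ZMod 2) * ∑ x, ‖φ x‖ ^ 2 := by
  have hterm : ∀ w x y, walshChar w x * φ x * (starRingEnd ℂ) (walshChar w y * φ y) =
      walshChar (x + y) w * (φ x * (starRingEnd ℂ) (φ y)) := by
    intro w x y
    rw [map_mul, conj_walshChar, walshChar_comm (x + y), AddChar.map_add_eq_mul]
    ring
  have horth : ∀ x y : ι → ZMod 2, x + y = 0 ↔ x = y := fun x y => by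
    rw [add_eq_zero_iff_eq_neg, ZModModule.neg_eq_self]
  apply Complex.ofReal_injective
  push_cast
  calc ∑ w, (‖∑ x, walshChar w x * φ x‖ : ℂ) ^ 2
      = ∑ x, ∑ y, (∑ w, walshChar (x + y) w) * (φ x * (starRingEnd ℂ) (φ y)) := by
        simp only [← Complex.mul_conj', map_sum, Finset.sum_mul_sum, hterm]
        rw [Finset.sum_comm]
        refine Finset.sum_congr rfl fun x _ => ?_
        rw [Finset.sum_comm]
        simp only [Finset.sum_mul]
    _ = ∑ x, (Fintype.card (ι → ZMod 2) : ℂ) * (φ x * (starRingEnd ℂ) (φ x)) := by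
        simp only [sum_walshChar, horth, ite_mul, zero_mul, Finset.sum_ite_eq, Finset.mem_univ,
          if_true]
    _ = (Fintype.card (ι → ZMod 2) : ℂ) * ∑ x, (‖φ x‖ : ℂ) ^ 2 := by
        simp only [Complex.mul_conj', Finset.mul_sum]

section QuadraticSum

variable {A : Matrix ι ι (ZMod 2)} {f : (ι → ZMod 2) → ZMod 4}

open scoped Classical in
theorem sq_norm_sum_iChar (hf : ∀ x y, f (x + y) = f x + f y + twice (x ⬝ᵥ A *ᵥ y)) :
    (‖∑ x, iChar (f x)‖ : ℂ) ^ 2 = Fintype.card (ι → ZMod 2) * ∑ z, kerChar hf z := by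
  have hshift : ∀ y z, iChar (f (y + z)) * (starRingEnd ℂ) (iChar (f y)) =
      iChar (f z) * walshChar (A *ᵥ z) y := by
    intro y z
    rw [← AddChar.map_neg_eq_conj, ← AddChar.map_add_eq_mul, walshChar_apply,
      ← AddChar.map_add_eq_mul, hf, dotProduct_comm]
    congr 1
    ring
  calc (‖∑ x, iChar (f x)‖ : ℂ) ^ 2
      = ∑ y, ∑ x, iChar (f x) * (starRingEnd ℂ) (iChar (f y)) := by
        rw [← Complex.mul_conj', map_sum, Finset.sum_mul_sum, Finset.sum_comm]
    _ = ∑ y, ∑ z, iChar (f z) * walshChar (A *ᵥ z) y := by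
        refine Finset.sum_congr rfl fun y _ => ?_
        exact (Fintype.sum_equiv (Equiv.addLeft y) _ _ fun z => (hshift y z).symm).symm
    _ = ∑ z, iChar (f z) * if A *ᵥ z = 0 then (Fintype.card (ι → ZMod 2) : ℂ) else 0 := by
        rw [Finset.sum_comm]
        simp only [← Finset.mul_sum, sum_walshChar]
    _ = Fintype.card (ι → ZMod 2) * ∑ z ∈ univ.filter (A *ᵥ · = 0), iChar (f z) := by
        rw [Finset.mul_sum, Finset.sum_filter]
        exact Finset.sum_congr rfl fun z _ => by split_ifs <;> ring
    _ = Fintype.card (ι → ZMod 2) * ∑ z, kerChar hf z := by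
        rw [Finset.sum_subtype _ (p := (· ∈ LinearMap.ker A.mulVecLin)) (by simp)]
        rfl

theorem sq_norm_sum_iChar_eq_zero_or
    (hf : ∀ x y, f (x + y) = f x + f y + twice (x ⬝ᵥ A *ᵥ y)) :
    ‖∑ x, iChar (f x)‖ ^ 2 = 0 ∨
      ‖∑ x, iChar (f x)‖ ^ 2 = 2 ^ Fintype.card ι * 2 ^ (Fintype.card ι - A.rank) := by
  classical
  have h := sq_norm_sum_iChar hf
  rw [AddChar.sum_eq_ite, Fintype.card_fun, ZMod.card,
    ← Nat.card_eq_fintype_card (α := LinearMap.ker A.mulVecLin), natCard_ker_mulVecLin] at h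
  split_ifs at h
  · right; exact_mod_cast h
  · left; simpa using h

end QuadraticSum

theorem sq_norm_inner_eigenvector_eq_zero_or {P₁ P₂ : Matrix ι ι (ZMod 2)}
    (hP₁ : P₁.IsSymm) (hP₂ : P₂.IsSymm) (w₁ w₂ : ι → ZMod 2) :
    ‖∑ x, (starRingEnd ℂ) (eigenvector P₁ w₁ x) * eigenvector P₂ w₂ x‖ ^ 2 = 0 ∨
      ‖∑ x, (starRingEnd ℂ) (eigenvector P₁ w₁ x) * eigenvector P₂ w₂ x‖ ^ 2 =
        2 ^ Fintype.card ι * 2 ^ (Fintype.card ι - (P₁ + P₂).rank) := by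
  simp only [conj_eigenvector_mul_eigenvector]
  refine sq_norm_sum_iChar_eq_zero_or fun x y => ?_
  rw [quadPhase_add hP₁, quadPhase_add hP₂, add_mulVec, dotProduct_add, twice_add,
    ← neg_twice (x ⬝ᵥ P₁ *ᵥ y)]
  simp only [dotProduct_add, twice_add]
  ring

theorem sum_sq_norm_inner_eigenvector (P₁ P₂ : Matrix ι ι (ZMod 2)) (w₂ : ι → ZMod 2) :
    ∑ w₁, ‖∑ x, (starRingEnd ℂ) (eigenvector P₁ w₁ x) * eigenvector P₂ w₂ x‖ ^ 2 =
      2 ^ Fintype.card ι * 2 ^ Fintype.card ι := by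
  have hsplit : ∀ w₁ x, (starRingEnd ℂ) (eigenvector P₁ w₁ x) * eigenvector P₂ w₂ x =
      walshChar w₁ x * ((starRingEnd ℂ) (iChar (quadPhase P₁ x)) * eigenvector P₂ w₂ x) := by
    intro w₁ x
    rw [eigenvector_eq_mul_walshChar P₁, map_mul, conj_walshChar]
    ring
  simp only [hsplit]
  rw [sum_sq_norm_sum_walshChar_mul]
  simp [eigenvector, AddChar.norm_apply]

end PauliEigenbasis

open PauliEigenbasis

/-- Inner product distribution of unnormalized stabilizer eigenvectors:
if `rank(P₁ + P₂) = k`, then for fixed `v` (associated with `P₂`), as `w₁`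
ranges over `F_2^m`, `|⟨u_{w₁}, v⟩|² = 2^{2m-k}` for exactly `2^k` vectors and
`⟨u_{w₁}, v⟩ = 0` for the remaining `2^m - 2^k`. -/
theorem eigenvector_inner_product_distribution
    (m k : ℕ) (P1 P2 : Matrix (Fin m) (Fin m) (ZMod 2))
    (hP1 : P1.IsSymm) (hP2 : P2.IsSymm)
    (hk : (P1 + P2).rank = k)
    (w2 : Fin m → ZMod 2) (v : (Fin m → ZMod 2) → ℂ)
    (hv : v = fun x => Complex.I ^
      ((∑ i, ∑ j, (x i).val * (P2 i j).val * (x j).val) +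
        2 * ∑ i, (w2 i).val * (x i).val))
    (u : (Fin m → ZMod 2) → (Fin m → ZMod 2) → ℂ)
    (hu : u = fun w1 x => Complex.I ^
      ((∑ i, ∑ j, (x i).val * (P1 i j).val * (x j).val) +
        2 * ∑ i, (w1 i).val * (x i).val)) :
    Nat.card {w1 : Fin m → ZMod 2 //
        ‖∑ x, (starRingEnd ℂ) (u w1 x) * v x‖ ^ 2 = 2 ^ (2 * m - k)} =
      2 ^ k ∧
    Nat.card {w1 : Fin m → ZMod 2 //
        (∑ x, (starRingEnd ℂ) (u w1 x) * v x) = 0} = 2 ^ m - 2 ^ k := by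
  subst hu hv
  simp only [I_pow_eq_eigenvector]
  have hkm : k ≤ m := hk ▸ (P1 + P2).rank_le_width
  have hdich (w1 : Fin m → ZMod 2) :
      ‖∑ x, (starRingEnd ℂ) (eigenvector P1 w1 x) * eigenvector P2 w2 x‖ ^ 2 = 0 ∨
      ‖∑ x, (starRingEnd ℂ) (eigenvector P1 w1 x) * eigenvector P2 w2 x‖ ^ 2 =
        2 ^ (2 * m - k) := by
    rw [show 2 * m - k = m + (m - k) by omega, pow_add]
    simpa [hk] using sq_norm_inner_eigenvector_eq_zero_or hP1 hP2 w1 w2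
  have hcount := natCard_mul_eq_sum_of_forall_eq_zero_or (by positivity) hdich
  rw [sum_sq_norm_inner_eigenvector, Fintype.card_fin,
    show (2 : ℝ) ^ m * 2 ^ m = 2 ^ k * 2 ^ (2 * m - k) by rw [← pow_add, ← pow_add]; congr 1; omega]
    at hcount
  have hcard := Nat.cast_inj.mp <|
    (mul_right_cancel₀ (by positivity) hcount).trans (by norm_num : (2 : ℝ) ^ k = (2 ^ k : ℕ))
  refine ⟨hcard, ?_⟩
  have hzero (z : ℂ) : z = 0 ↔ ‖z‖ ^ 2 = 0 := by rw [sq_eq_zero_iff, norm_eq_zero]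
  rw [Nat.card_congr (Equiv.subtypeEquivRight fun w1 => hzero _),
    natCard_zero_eq_sub_of_forall_eq_zero_or (by positivity) hdich, hcard]
  simp
end

section
/- Let m be odd and P_1 ≠ P_2 be two matrices from the Kerdock set P_K(m) (so P_1 + P_2 is invertible), and let u, v ∈ C^{2^m} be quaternary-phase vectors u = (i^{xP_1x^T + 2w_1x^T + κ_1})_x, v = (i^{xP_2x^T + 2w_2x^T + κ_2})_x. Writing ⟨u,v⟩ = (n_0 − n_2) + (n_1 − n_3) i with n_j the number of coordinates x where the Z_4-valued difference of the codewords equals j, one has (n_0 − n_2)^2 = (n_1 − n_3)^2 = 2^{m−1}. -/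
open Matrix BigOperators

/-!
Put `D = c₁ - c₂` and `S = ∑ₓ i ^ D(x) = (n₀ - n₂) + (n₁ - n₃) i`. Lifting bits to `{0, 1} ⊆ ℤ₄`,
the quadratic part of a Kerdock codeword obeys `Q(u + y) = Q(u) + Q(y) + 2 u P yᵀ` because `P` is
symmetric: the carries `2 uᵢ yᵢ` of the lift only contribute multiples of `4`. Hence
`D(u + y) - D(y) = D(u) - D(0) + 2 u (P₁ - P₂) yᵀ`, and in
`|S|² = ∑_{u,y} i ^ (D(u + y) - D(y))` the sum over `y` is a sum of the character
`y ↦ (-1) ^ (u (P₁ - P₂) yᵀ)`, which vanishes unless `u (P₁ - P₂) = 0`. The entries of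
`P₁ - P₂` are `Tr(αⁱ (z₁ - z₂) αʲ)`, so nondegeneracy of the trace form makes `P₁ - P₂`
invertible, only `u = 0` survives, and `|S|² = 2 ^ m`. Finally `a² + b² = 2 ^ m` with `m` odd
forces `a² = b² = 2 ^ (m - 1)`: modulo `4` both `a` and `b` are even, and one descends to `m = 1`.
-/

theorem Int.even_and_even_of_four_dvd_sq_add_sq {a b : ℤ} (h : 4 ∣ a ^ 2 + b ^ 2) :
    Even a ∧ Even b := by
  rcases Int.even_or_odd' a with ⟨c, rfl | rfl⟩ <;> rcases Int.even_or_odd' b with ⟨d, rfl | rfl⟩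
  · exact ⟨even_two_mul c, even_two_mul d⟩
  all_goals
    exfalso
    ring_nf at h
    omega

theorem Int.sq_eq_of_sq_add_sq_eq_two_mul_four_pow (k : ℕ) {a b : ℤ}
    (h : a ^ 2 + b ^ 2 = 2 * 4 ^ k) : a ^ 2 = 4 ^ k ∧ b ^ 2 = 4 ^ k := by
  induction k generalizing a b with
  | zero =>
    have ha : |a| ≤ 1 := by nlinarith [abs_mul_abs_self a, abs_nonneg a, sq_nonneg b]
    have hb : |b| ≤ 1 := by nlinarith [abs_mul_abs_self b, abs_nonneg b, sq_nonneg a]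
    obtain ⟨ha₁, ha₂⟩ := abs_le.1 ha
    obtain ⟨hb₁, hb₂⟩ := abs_le.1 hb
    interval_cases a <;> interval_cases b <;> simp_all
  | succ k ih =>
    obtain ⟨⟨c, rfl⟩, ⟨d, rfl⟩⟩ := Int.even_and_even_of_four_dvd_sq_add_sq
      ⟨2 * 4 ^ k, by rw [h]; ring⟩
    obtain ⟨hc, hd⟩ := ih (a := c) (b := d) (by ring_nf at h ⊢; linarith)
    constructor
    · linear_combination 4 * hc
    · linear_combination 4 * hd

theorem Int.sq_eq_two_pow_of_sq_add_sq_eq_two_pow {m : ℕ} (hm : Odd m) {a b : ℤ}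
    (h : a ^ 2 + b ^ 2 = 2 ^ m) : a ^ 2 = 2 ^ (m - 1) ∧ b ^ 2 = 2 ^ (m - 1) := by
  obtain ⟨k, rfl⟩ := hm
  have h4 : (2 : ℤ) ^ (2 * k) = 4 ^ k := by rw [pow_mul]; norm_num
  rw [Nat.add_sub_cancel, h4]
  exact Int.sq_eq_of_sq_add_sq_eq_two_mul_four_pow k (by rw [h, pow_succ, h4, mul_comm])

/-- `iPowRe j + iPowIm j * I = I ^ j`, for `I` the imaginary unit. -/
def iPowRe (j : ZMod 4) : ℤ := if j = 0 then 1 else if j = 2 then -1 else 0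

def iPowIm (j : ZMod 4) : ℤ := if j = 1 then 1 else if j = 3 then -1 else 0

theorem iPowRe_sub (a b : ZMod 4) :
    iPowRe (a - b) = iPowRe a * iPowRe b + iPowIm a * iPowIm b := by
  revert a b
  decide

theorem iPowRe_add_two_mul_val (a : ZMod 4) (b : ZMod 2) :
    iPowRe (a + 2 * (b.val : ZMod 4)) = iPowRe a * (-1) ^ b.val := by
  revert a b
  decide

theorem sum_comp_eq_sum_card_fiber_mul {V β : Type*} [Fintype V] [Fintype β] (f : V → β)
    (χ : β → ℤ) :
    ∑ x, χ (f x) = ∑ j, (Nat.card {x // f x = j} : ℤ) * χ j := by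
  classical
  rw [← Finset.sum_fiberwise Finset.univ f]
  refine Fintype.sum_congr _ _ fun j => ?_
  rw [Finset.sum_congr rfl fun x hx => by rw [(Finset.mem_filter.1 hx).2], Finset.sum_const,
    nsmul_eq_mul, Nat.card_eq_fintype_card, Fintype.card_subtype]

theorem ZMod.sum_univ_four {M : Type*} [AddCommMonoid M] (g : ZMod 4 → M) :
    ∑ j, g j = g 0 + g 1 + g 2 + g 3 :=
  Fin.sum_univ_four g

theorem sum_iPowRe {V : Type*} [Fintype V] (f : V → ZMod 4) :
    ∑ x, iPowRe (f x) = Nat.card {x // f x = 0} - Nat.card {x // f x = 2} := by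
  rw [sum_comp_eq_sum_card_fiber_mul, ZMod.sum_univ_four]
  simp +decide [iPowRe, sub_eq_add_neg]

theorem sum_iPowIm {V : Type*} [Fintype V] (f : V → ZMod 4) :
    ∑ x, iPowIm (f x) = Nat.card {x // f x = 1} - Nat.card {x // f x = 3} := by
  rw [sum_comp_eq_sum_card_fiber_mul, ZMod.sum_univ_four]
  simp +decide [iPowIm, sub_eq_add_neg]

theorem sum_neg_one_pow_dotProduct {ι : Type*} [Fintype ι] [DecidableEq ι] {w : ι → ZMod 2}
    (hw : w ≠ 0) : ∑ y, (-1 : ℤ) ^ (w ⬝ᵥ y).val = 0 := by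
  let ψ : AddChar (ι → ZMod 2) ℤ :=
    { toFun := fun y => (-1) ^ (w ⬝ᵥ y).val
      map_zero_eq_one' := by simp
      map_add_eq_mul' := fun y y' => by
        rw [dotProduct_add]
        generalize w ⬝ᵥ y = a
        generalize w ⬝ᵥ y' = b
        revert a b
        decide }
  obtain ⟨i, hi⟩ : ∃ i, w i ≠ 0 := Function.ne_iff.1 hw
  refine AddChar.sum_eq_zero_of_ne_one (ψ := ψ) fun h => hi ?_
  have h1 : (-1 : ℤ) ^ (w i).val = 1 := by simpa [ψ] using DFunLike.congr_fun h (Pi.single i 1)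
  revert h1
  generalize w i = a
  revert a
  decide

theorem Matrix.IsSymm.add_dotProduct_mulVec_add {ι R : Type*} [Fintype ι] [CommSemiring R]
    {N : Matrix ι ι R} (hN : N.IsSymm) (x z : ι → R) :
    (x + z) ⬝ᵥ N *ᵥ (x + z) = x ⬝ᵥ N *ᵥ x + 2 * (x ⬝ᵥ N *ᵥ z) + z ⬝ᵥ N *ᵥ z := by
  have hsymm : z ⬝ᵥ N *ᵥ x = x ⬝ᵥ N *ᵥ z := by
    rw [dotProduct_mulVec, ← mulVec_transpose, hN.eq, dotProduct_comm]
  simp only [mulVec_add, dotProduct_add, add_dotProduct, hsymm]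
  ring

section Z4

variable {ι : Type*}

local notation "ρ" => ZMod.castHom (show 2 ∣ 4 by norm_num) (ZMod 2)

theorem castHom_val (a : ZMod 2) : ρ (a.val : ZMod 4) = a := by
  revert a
  decide

theorem two_mul_eq_two_mul_val_castHom (r : ZMod 4) : 2 * r = 2 * ((ρ r).val : ZMod 4) := by
  revert r
  decide

theorem two_mul_val_add (a b : ZMod 2) :
    2 * ((a + b).val : ZMod 4) = 2 * (a.val : ZMod 4) + 2 * (b.val : ZMod 4) := by
  revert a b
  decide

theorem two_mul_val_sub (a b : ZMod 2) :
    2 * (a.val : ZMod 4) - 2 * (b.val : ZMod 4) = 2 * ((a - b).val : ZMod 4) := by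
  revert a b
  decide

def liftZ4 (x : ι → ZMod 2) : ι → ZMod 4 := fun i => (x i).val

theorem liftZ4_zero : liftZ4 (0 : ι → ZMod 2) = 0 := by
  funext i
  simp [liftZ4]

theorem liftZ4_add (x y : ι → ZMod 2) :
    liftZ4 (x + y) = liftZ4 x + liftZ4 y + (2 : ZMod 4) • (liftZ4 x * liftZ4 y) := by
  funext i
  simp only [liftZ4, Pi.add_apply, Pi.smul_apply, Pi.mul_apply]
  generalize x i = a
  generalize y i = b
  revert a b
  decide

variable [Fintype ι]

def IsZ4Quadratic (f : (ι → ZMod 2) → ZMod 4) (M : Matrix ι ι (ZMod 2)) : Prop :=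
  ∀ u y, f (u + y) - f y = f u - f 0 + 2 * ((u ᵥ* M ⬝ᵥ y).val : ZMod 4)

theorem IsZ4Quadratic.sub {f g : (ι → ZMod 2) → ZMod 4} {M N : Matrix ι ι (ZMod 2)}
    (hf : IsZ4Quadratic f M) (hg : IsZ4Quadratic g N) : IsZ4Quadratic (f - g) (M - N) := by
  intro u y
  simp only [Pi.sub_apply, vecMul_sub, sub_dotProduct, ← two_mul_val_sub]
  linear_combination hf u y - hg u y

def z4Codeword (M : Matrix ι ι (ZMod 2)) (w : ι → ZMod 2) (κ : ZMod 4) (x : ι → ZMod 2) :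
    ZMod 4 :=
  ((∑ i, ∑ j, (x i).val * (M i j).val * (x j).val + 2 * ∑ i, (w i).val * (x i).val : ℕ) :
    ZMod 4) + κ

theorem z4Codeword_eq (M : Matrix ι ι (ZMod 2)) (w : ι → ZMod 2) (κ : ZMod 4) (x : ι → ZMod 2) :
    z4Codeword M w κ x = liftZ4 x ⬝ᵥ M.map (fun a => (a.val : ZMod 4)) *ᵥ liftZ4 x
      + 2 * ((w ⬝ᵥ x).val : ZMod 4) + κ := by
  have hlin : ρ (liftZ4 w ⬝ᵥ liftZ4 x) = w ⬝ᵥ x := by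
    simp only [RingHom.map_dotProduct, Function.comp_def, liftZ4, castHom_val]
  rw [z4Codeword, ← hlin, ← two_mul_eq_two_mul_val_castHom]
  push_cast
  simp only [dotProduct, mulVec, liftZ4, map_apply, Finset.mul_sum, mul_assoc]

theorem isZ4Quadratic_z4Codeword {M : Matrix ι ι (ZMod 2)} (hM : M.IsSymm)
    (w : ι → ZMod 2) (κ : ZMod 4) : IsZ4Quadratic (z4Codeword M w κ) M := by
  intro u y
  have hN := hM.map fun a => (a.val : ZMod 4)
  rw [z4Codeword_eq, z4Codeword_eq, z4Codeword_eq, z4Codeword_eq, liftZ4_add,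
    hN.add_dotProduct_mulVec_add, hN.add_dotProduct_mulVec_add, dotProduct_add, two_mul_val_add,
    liftZ4_zero, two_mul_eq_two_mul_val_castHom (liftZ4 u ⬝ᵥ _ *ᵥ liftZ4 y)]
  have hcross : ρ (liftZ4 u ⬝ᵥ M.map (fun a => (a.val : ZMod 4)) *ᵥ liftZ4 y) = u ᵥ* M ⬝ᵥ y := by
    simp only [RingHom.map_dotProduct, Function.comp_def, RingHom.map_mulVec, liftZ4, map_map,
      castHom_val]
    exact dotProduct_mulVec u M y
  simp only [hcross, mulVec_smul, dotProduct_smul, smul_dotProduct, smul_eq_mul, mulVec_zero,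
    dotProduct_zero, ZMod.val_zero, Nat.cast_zero]
  -- the carry vector `E` only enters with a factor `4 = 0`
  have h4 : (4 : ZMod 4) = 0 := rfl
  set N := M.map fun a => (a.val : ZMod 4)
  set E := liftZ4 u * liftZ4 y
  linear_combination ((liftZ4 u + liftZ4 y) ⬝ᵥ N *ᵥ E + E ⬝ᵥ N *ᵥ E) * h4

variable [DecidableEq ι]

theorem IsZ4Quadratic.sq_sum_iPowRe_add_sq_sum_iPowIm {f : (ι → ZMod 2) → ZMod 4}
    {M : Matrix ι ι (ZMod 2)} (hf : IsZ4Quadratic f M) (hM : IsUnit M) :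
    (∑ x, iPowRe (f x)) ^ 2 + (∑ x, iPowIm (f x)) ^ 2 = 2 ^ Fintype.card ι := by
  calc (∑ x, iPowRe (f x)) ^ 2 + (∑ x, iPowIm (f x)) ^ 2
      = ∑ x, ∑ y, iPowRe (f x - f y) := by
        simp only [sq, Fintype.sum_mul_sum, iPowRe_sub, Finset.sum_add_distrib]
    _ = ∑ y, ∑ u, iPowRe (f (u + y) - f y) := by
        refine Finset.sum_comm.trans (Fintype.sum_congr _ _ fun y => ?_)
        exact (Fintype.sum_equiv (Equiv.addRight y) _ _ fun u => rfl).symm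
    _ = ∑ u, iPowRe (f u - f 0) * ∑ y, (-1 : ℤ) ^ (u ᵥ* M ⬝ᵥ y).val := by
        refine Finset.sum_comm.trans (Fintype.sum_congr _ _ fun u => ?_)
        rw [Finset.mul_sum]
        exact Fintype.sum_congr _ _ fun y => by rw [hf u y, iPowRe_add_two_mul_val]
    _ = iPowRe (f 0 - f 0) * ∑ y : ι → ZMod 2, (-1 : ℤ) ^ (0 ᵥ* M ⬝ᵥ y).val := by
        refine Fintype.sum_eq_single 0 fun u hu => ?_
        have hum : u ᵥ* M ≠ 0 := fun h =>
          hu (vecMul_injective_iff_isUnit.2 hM (h.trans (zero_vecMul M).symm))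
        rw [sum_neg_one_pow_dotProduct hum, mul_zero]
    _ = 2 ^ Fintype.card ι := by
        simp [iPowRe]

end Z4

section TraceMulMatrix

variable (K : Type*) {F ι : Type*} [Field K] [Field F] [Algebra K F]

noncomputable def traceMulMatrix (b : ι → F) (z : F) : Matrix ι ι K :=
  Matrix.of fun i j => Algebra.trace K F (b i * z * b j)

variable {K}

theorem traceMulMatrix_isSymm (b : ι → F) (z : F) : (traceMulMatrix K b z).IsSymm :=
  IsSymm.ext fun i j => by
    simp only [traceMulMatrix, of_apply]
    congr 1
    ring

theorem traceMulMatrix_sub (b : ι → F) (z₁ z₂ : F) :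
    traceMulMatrix K b z₁ - traceMulMatrix K b z₂ = traceMulMatrix K b (z₁ - z₂) := by
  ext i j
  simp only [traceMulMatrix, Matrix.sub_apply, of_apply, ← map_sub, mul_sub, sub_mul]

variable [Fintype ι]

theorem isUnit_traceMulMatrix [Algebra.IsSeparable K F] [DecidableEq ι] (b : Module.Basis ι K F)
    {z : F} (hz : z ≠ 0) : IsUnit (traceMulMatrix K b z) := by
  have : FiniteDimensional K F := .of_basis b
  rw [isUnit_iff_isUnit_det, isUnit_iff_ne_zero, Ne, ← exists_vecMul_eq_zero_iff]
  rintro ⟨u, hu0, hu⟩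
  set a := ∑ i, u i • b i
  have htrace : ∀ j, Algebra.trace K F (a * z * b j) = 0 := fun j => by
    refine Eq.trans ?_ (congrFun hu j)
    simp only [a, vecMul, dotProduct, traceMulMatrix, of_apply, Finset.sum_mul, map_sum,
      smul_mul_assoc, map_smul, smul_eq_mul]
  have haz : a * z = 0 := (traceForm_nondegenerate K F).1 _ fun c => by
    rw [← b.sum_repr c, map_sum]
    exact Finset.sum_eq_zero fun j _ => by
      rw [map_smul, Algebra.traceForm_apply, htrace, smul_zero]
  exact hu0 (funext (Fintype.linearIndependent_iff.1 b.linearIndependent u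
    ((mul_eq_zero.1 haz).resolve_right hz)))

theorem mul_eq_traceMulMatrix [DecidableEq ι] {b : ι → F} {A : F → Matrix ι ι K}
    (hA : ∀ w v, ∑ i, (v ᵥ* A w) i • b i = (∑ i, v i • b i) * w) {W : Matrix ι ι K}
    (hW : ∀ i j, W i j = Algebra.trace K F (b i * b j)) (z : F) :
    A z * W = traceMulMatrix K b z := by
  ext i j
  have hrow : ∑ k, A z i k • b k = b i * z := by
    simpa [single_one_vecMul] using hA z (Pi.single i 1)
  simp only [mul_apply, hW, traceMulMatrix, of_apply, ← hrow, Finset.sum_mul, map_sum,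
    smul_mul_assoc, map_smul, smul_eq_mul]

end TraceMulMatrix

theorem kerdock_codeword_difference_counts_general
    (m : ℕ) (hm : Odd m) (F : Type) [Field F] [Algebra (ZMod 2) F]
    (α : F) (bas : Module.Basis (Fin m) (ZMod 2) F)
    (hbas : ∀ i : Fin m, bas i = α ^ (i : ℕ))
    (W : Matrix (Fin m) (Fin m) (ZMod 2))
    (hW : ∀ i j, W i j = Algebra.trace (ZMod 2) F (α ^ (i : ℕ) * α ^ (j : ℕ)))
    (A : F → Matrix (Fin m) (Fin m) (ZMod 2))
    (hA : ∀ (w : F) (v : Fin m → ZMod 2),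
      (∑ i, Matrix.vecMul v (A w) i • α ^ (i : ℕ)) = (∑ i, v i • α ^ (i : ℕ)) * w)
    (z1 z2 : F) (hz : z1 ≠ z2)
    (w1 w2 : Fin m → ZMod 2) (κ1 κ2 : ZMod 4)
    (c1 c2 : (Fin m → ZMod 2) → ZMod 4)
    (hc1 : c1 = fun x =>
      (((∑ i, ∑ j, (x i).val * ((A z1 * W) i j).val * (x j).val) +
          2 * ∑ i, (w1 i).val * (x i).val : ℕ) : ZMod 4) + κ1)
    (hc2 : c2 = fun x =>
      (((∑ i, ∑ j, (x i).val * ((A z2 * W) i j).val * (x j).val) +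
          2 * ∑ i, (w2 i).val * (x i).val : ℕ) : ZMod 4) + κ2)
    (n : ZMod 4 → ℕ)
    (hn : ∀ j, n j = Nat.card {x : Fin m → ZMod 2 // c1 x - c2 x = j}) :
    ((n 0 : ℤ) - (n 2 : ℤ)) ^ 2 = 2 ^ (m - 1) ∧
      ((n 1 : ℤ) - (n 3 : ℤ)) ^ 2 = 2 ^ (m - 1) := by
  have hK : ∀ z, A z * W = traceMulMatrix (ZMod 2) bas z :=
    mul_eq_traceMulMatrix (by simpa only [hbas] using hA) (by simpa only [hbas] using hW)
  have hquad : IsZ4Quadratic (c1 - c2) (A z1 * W - A z2 * W) := by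
    subst hc1 hc2
    exact (isZ4Quadratic_z4Codeword (hK z1 ▸ traceMulMatrix_isSymm _ _) w1 κ1).sub
      (isZ4Quadratic_z4Codeword (hK z2 ▸ traceMulMatrix_isSymm _ _) w2 κ2)
  have hunit : IsUnit (A z1 * W - A z2 * W) := by
    have : Module.Finite (ZMod 2) F := .of_basis bas
    rw [hK, hK, traceMulMatrix_sub]
    exact isUnit_traceMulMatrix bas (sub_ne_zero.2 hz)
  have hsq := hquad.sq_sum_iPowRe_add_sq_sum_iPowIm hunit
  simp only [sum_iPowRe, sum_iPowIm, Pi.sub_apply, ← hn, Fintype.card_fin] at hsq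
  exact Int.sq_eq_two_pow_of_sq_add_sq_eq_two_pow hm hsq

/-- For `m` odd and distinct Kerdock matrices `P₁ = A_{z₁}W ≠ P₂ = A_{z₂}W`,
writing `n_j` for the number of coordinates where the difference of the two
`Z₄`-valued Kerdock codewords equals `j`, one has
`(n₀ - n₂)² = (n₁ - n₃)² = 2^{m-1}`. -/
theorem kerdock_codeword_difference_counts
    (m : ℕ) (hm : Odd m) (F : Type) [Field F] [Algebra (ZMod 2) F]
    (α : F) (bas : Module.Basis (Fin m) (ZMod 2) F)
    (hbas : ∀ i : Fin m, bas i = α ^ (i : ℕ))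
    (hα : ∀ x : F, x ≠ 0 → ∃ k : ℕ, x = α ^ k)
    (W : Matrix (Fin m) (Fin m) (ZMod 2))
    (hW : ∀ i j, W i j = Algebra.trace (ZMod 2) F (α ^ (i : ℕ) * α ^ (j : ℕ)))
    (A : F → Matrix (Fin m) (Fin m) (ZMod 2))
    (hA : ∀ (w : F) (v : Fin m → ZMod 2),
      (∑ i, Matrix.vecMul v (A w) i • α ^ (i : ℕ)) = (∑ i, v i • α ^ (i : ℕ)) * w)
    (z1 z2 : F) (hz : z1 ≠ z2)
    (w1 w2 : Fin m → ZMod 2) (κ1 κ2 : ZMod 4)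
    (c1 c2 : (Fin m → ZMod 2) → ZMod 4)
    (hc1 : c1 = fun x =>
      (((∑ i, ∑ j, (x i).val * ((A z1 * W) i j).val * (x j).val) +
          2 * ∑ i, (w1 i).val * (x i).val : ℕ) : ZMod 4) + κ1)
    (hc2 : c2 = fun x =>
      (((∑ i, ∑ j, (x i).val * ((A z2 * W) i j).val * (x j).val) +
          2 * ∑ i, (w2 i).val * (x i).val : ℕ) : ZMod 4) + κ2)
    (n : ZMod 4 → ℕ)
    (hn : ∀ j, n j = Nat.card {x : Fin m → ZMod 2 // c1 x - c2 x = j}) :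
    ((n 0 : ℤ) - (n 2 : ℤ)) ^ 2 = 2 ^ (m - 1) ∧
      ((n 1 : ℤ) - (n 3 : ℤ)) ^ 2 = 2 ^ (m - 1) :=
  kerdock_codeword_difference_counts_general m hm F α bas hbas W hW A hA z1 z2 hz w1 w2 κ1 κ2 c1 c2
    hc1 hc2 n hn
end

section
/- Let m be odd. The binary Kerdock code of length 2^{m+1} (the Gray image of the Z_4-linear Kerdock code K(m)) has weight distribution: A_0 = A_{2^{m+1}} = 1, A_{2^m} = 2^{m+2} − 2, and A_{2^m ± 2^{(m−1)/2}} = 2^{2m+1} − 2^{m+1} each, with all other A_i = 0. -/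
/-!
The Gray weight of a word `c : 𝔽₂ᵐ → ℤ₄` is `2ᵐ - Re S(c)` with `S(c) = ∑ₓ i ^ c(x)`. A Kerdock
word is `κ + Q_z(x) + 2 w·x`, where `Q_z` lifts to `ℤ₄` the symmetric form `(x, y) ↦ Tr(z x y)`
on `𝔽_{2ᵐ} ≅ 𝔽₂ᵐ`. For `z = 0` these are Reed–Muller words (weights `0`, `2ᵐ`, `2ᵐ⁺¹`). For
`z ≠ 0` the form is nondegenerate, so `|S|² = 2ᵐ`; since `m` is odd, `2ᵐ` is a sum of two squares
only as `(2^((m-1)/2))² + (2^((m-1)/2))²`, and as `κ` runs through `ℤ₄` the sum `S` is rotated by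
`i ^ κ`, giving two words of each weight `2ᵐ ± 2^((m-1)/2)`.
-/

open Matrix

theorem Zsqrtd.re_sum {d : ℤ} {ι : Type*} (s : Finset ι) (f : ι → ℤ√d) :
    (∑ i ∈ s, f i).re = ∑ i ∈ s, (f i).re :=
  map_sum (AddMonoidHom.mk' Zsqrtd.re fun _ _ => rfl) f s

theorem Int.abs_eq_two_pow_of_sq_add_sq_eq {a b : ℤ} {k : ℕ} (h : a ^ 2 + b ^ 2 = 2 ^ (2 * k + 1)) :
    |a| = 2 ^ k ∧ |b| = 2 ^ k := by
  induction k generalizing a b with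
  | zero =>
    norm_num at h ⊢
    rw [← sq_abs a, ← sq_abs b] at h
    have ha : |a| ≤ 1 := by nlinarith [abs_nonneg a, sq_nonneg |b|]
    have hb : |b| ≤ 1 := by nlinarith [abs_nonneg b, sq_nonneg |a|]
    obtain ⟨ha0, hb0⟩ := And.intro (abs_nonneg a) (abs_nonneg b)
    interval_cases |a| <;> interval_cases |b| <;> simp_all
  | succ k ih =>
    have hsq4 : ∀ x : ℤ, Even x → 4 ∣ x ^ 2 := fun x ⟨c, hc⟩ => ⟨c ^ 2, by rw [hc]; ring⟩
    have h4 : 4 ∣ a ^ 2 + b ^ 2 := ⟨2 ^ (2 * k + 1), by rw [h]; ring⟩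
    obtain ⟨⟨c, rfl⟩, ⟨d, rfl⟩⟩ : Even a ∧ Even b := by
      rcases Int.even_or_odd a with ha | ha <;> rcases Int.even_or_odd b with hb | hb
      · exact ⟨ha, hb⟩
      · have := hsq4 _ ha; have := Int.sq_mod_four_eq_one_of_odd hb; omega
      · have := Int.sq_mod_four_eq_one_of_odd ha; have := hsq4 _ hb; omega
      · have := Int.sq_mod_four_eq_one_of_odd ha; have := Int.sq_mod_four_eq_one_of_odd hb; omega
    obtain ⟨hc, hd⟩ := ih (a := c) (b := d) <|
      mul_left_cancel₀ four_ne_zero (by linear_combination h)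
    rw [← two_mul, ← two_mul, abs_mul, abs_mul, hc, hd, pow_succ]
    norm_num [mul_comm]

theorem Nat.card_subtype_mem_range_and {α β : Type*} {f : α → β} (hf : Function.Injective f)
    (p : β → Prop) : Nat.card {b // b ∈ Set.range f ∧ p b} = Nat.card {a // p (f a)} :=
  (Nat.card_congr (((Equiv.ofInjective f hf).subtypeEquiv fun _ => Iff.rfl).trans
    (Equiv.subtypeSubtypeEquivSubtypeInter _ _))).symm

namespace Matrix.IsSymm

variable {n R : Type*} [Fintype n] [CommRing R] {M : Matrix n n R}

theorem dotProduct_mulVec_add_self (hM : M.IsSymm) (a b : n → R) :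
    (a + b) ⬝ᵥ M *ᵥ (a + b) = a ⬝ᵥ M *ᵥ a + b ⬝ᵥ M *ᵥ b + 2 * (a ⬝ᵥ M *ᵥ b) := by
  have hba : b ⬝ᵥ M *ᵥ a = a ⬝ᵥ M *ᵥ b := by
    rw [← dotProduct_transpose_mulVec, hM.eq]
  simp only [mulVec_add, dotProduct_add, add_dotProduct, hba]
  ring

theorem dotProduct_mulVec_add_two_smul (h4 : (4 : R) = 0) (hM : M.IsSymm) (a e : n → R) :
    (a + (2 : R) • e) ⬝ᵥ M *ᵥ (a + (2 : R) • e) = a ⬝ᵥ M *ᵥ a := by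
  rw [hM.dotProduct_mulVec_add_self]
  simp only [mulVec_smul, dotProduct_smul, smul_dotProduct, smul_eq_mul]
  linear_combination (e ⬝ᵥ M *ᵥ e + a ⬝ᵥ M *ᵥ e) * h4

end Matrix.IsSymm

namespace Kerdock

def liftZ4 (a : ZMod 2) : ZMod 4 := a.val

def twoLift : ZMod 2 →+ ZMod 4 where
  toFun a := 2 * liftZ4 a
  map_zero' := rfl
  map_add' := by decide

theorem twoLift_apply (a : ZMod 2) : twoLift a = 2 * liftZ4 a := rfl

theorem liftZ4_add :
    ∀ a b : ZMod 2, liftZ4 (a + b) = liftZ4 a + liftZ4 b + 2 * (liftZ4 a * liftZ4 b) := by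
  decide

theorem twoLift_mul : ∀ a b : ZMod 2, twoLift (a * b) = liftZ4 a * twoLift b := by decide

theorem twoLift_injective : Function.Injective twoLift := by decide

section QuadraticForm

variable {n : Type*} [Fintype n]

def quadZ4 (P : Matrix n n (ZMod 2)) (x : n → ZMod 2) : ZMod 4 :=
  (liftZ4 ∘ x) ⬝ᵥ P.map liftZ4 *ᵥ (liftZ4 ∘ x)

theorem twoLift_dotProduct_mulVec (P : Matrix n n (ZMod 2)) (x u : n → ZMod 2) :
    twoLift (x ⬝ᵥ P *ᵥ u) = 2 * ((liftZ4 ∘ x) ⬝ᵥ P.map liftZ4 *ᵥ (liftZ4 ∘ u)) := by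
  simp only [dotProduct, mulVec, map_sum, twoLift_mul, Finset.mul_sum, Function.comp_apply,
    Matrix.map_apply]
  refine Finset.sum_congr rfl fun i _ => Finset.sum_congr rfl fun j _ => ?_
  rw [twoLift_apply]
  ring

-- The lift of `x + u` is `x̃ + ũ + 2 • (x̃ * ũ)`, and the correction is invisible to a symmetric
-- form over `ℤ₄`.
theorem quadZ4_add {P : Matrix n n (ZMod 2)} (hP : P.IsSymm) (x u : n → ZMod 2) :
    quadZ4 P (x + u) = quadZ4 P x + quadZ4 P u + twoLift (x ⬝ᵥ P *ᵥ u) := by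
  have hlift : liftZ4 ∘ (x + u) =
      (liftZ4 ∘ x + liftZ4 ∘ u) + (2 : ZMod 4) • (liftZ4 ∘ x * liftZ4 ∘ u) := by
    funext i; simp [liftZ4_add]
  rw [quadZ4, hlift, (hP.map _).dotProduct_mulVec_add_two_smul (by decide),
    (hP.map _).dotProduct_mulVec_add_self, twoLift_dotProduct_mulVec]
  rfl

def kerdockFun (P : Matrix n n (ZMod 2)) (w x : n → ZMod 2) : ZMod 4 :=
  quadZ4 P x + twoLift (w ⬝ᵥ x)

theorem natCast_sum_eq_kerdockFun (P : Matrix n n (ZMod 2)) (w x : n → ZMod 2) :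
    (((∑ i, ∑ j, (x i).val * (P i j).val * (x j).val) + 2 * ∑ i, (w i).val * (x i).val : ℕ) :
      ZMod 4) = kerdockFun P w x := by
  simp only [kerdockFun, quadZ4, dotProduct, mulVec, map_sum, twoLift_mul]
  simp only [twoLift_apply, Finset.mul_sum, Function.comp_apply, Matrix.map_apply, liftZ4]
  push_cast
  simp only [mul_assoc, mul_left_comm (2 : ZMod 4)]

theorem kerdockFun_zero (P : Matrix n n (ZMod 2)) (w : n → ZMod 2) : kerdockFun P w 0 = 0 := by
  simp [kerdockFun, quadZ4, liftZ4]

theorem kerdockFun_add {P : Matrix n n (ZMod 2)} (hP : P.IsSymm) (w x u : n → ZMod 2) :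
    kerdockFun P w (x + u) =
      kerdockFun P w x + kerdockFun P w u + twoLift (x ⬝ᵥ P *ᵥ u) := by
  rw [kerdockFun, kerdockFun, kerdockFun, quadZ4_add hP, dotProduct_add, map_add]
  abel

theorem kerdockFun_zero_matrix (w x : n → ZMod 2) : kerdockFun 0 w x = twoLift (w ⬝ᵥ x) := by
  simp [kerdockFun, quadZ4, liftZ4]

theorem eq_and_eq_of_kerdockFun_eq [DecidableEq n] {P P' : Matrix n n (ZMod 2)} (hP : P.IsSymm)
    (hP' : P'.IsSymm) {w w' : n → ZMod 2} (h : kerdockFun P w = kerdockFun P' w') :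
    P = P' ∧ w = w' := by
  have hB : Matrix.toBilin' P = Matrix.toBilin' P' := by
    refine LinearMap.ext₂ fun x u => twoLift_injective ?_
    have := congrFun h (x + u)
    rwa [kerdockFun_add hP, kerdockFun_add hP', congrFun h x, congrFun h u, add_right_inj,
      ← toBilin'_apply', ← toBilin'_apply'] at this
  obtain rfl := Matrix.toBilin'.injective hB
  refine ⟨rfl, funext fun i => twoLift_injective ?_⟩
  simpa [kerdockFun] using congrFun h (Pi.single i 1)

end QuadraticForm

def iChar : AddChar (ZMod 4) GaussianInt := AddChar.zmodChar 4 (ζ := ⟨0, 1⟩) (by decide)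

theorem star_iChar : ∀ a : ZMod 4, star (iChar a) = iChar (-a) := by decide

theorem iChar_twoLift_eq_one_iff : ∀ b : ZMod 2, iChar (twoLift b) = 1 ↔ b = 0 := by decide

def leeWeight (v : ZMod 4) : ℕ := min v.val (4 - v.val)

theorem leeWeight_eq_gray {gray : ZMod 4 → ZMod 2 × ZMod 2}
    (hgray : gray 0 = (0, 0) ∧ gray 1 = (0, 1) ∧ gray 2 = (1, 1) ∧ gray 3 = (1, 0)) (v : ZMod 4) :
    (if (gray v).1 = 0 then 0 else 1) + (if (gray v).2 = 0 then 0 else 1) = leeWeight v := by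
  obtain ⟨h0, h1, h2, h3⟩ := hgray
  obtain rfl | rfl | rfl | rfl : v = 0 ∨ v = 1 ∨ v = 2 ∨ v = 3 := by revert v; decide
  all_goals simp only [h0, h1, h2, h3]; decide

theorem leeWeight_eq : ∀ v : ZMod 4, (leeWeight v : ℤ) = 1 - (iChar v).re := by decide

theorem sum_leeWeight_add {V : Type*} [Fintype V] (f : V → ZMod 4) (κ : ZMod 4) :
    ((∑ x, leeWeight (f x + κ) : ℕ) : ℤ) = Fintype.card V - ((∑ x, iChar (f x)) * iChar κ).re := by
  rw [Finset.sum_mul, Zsqrtd.re_sum, Nat.cast_sum]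
  simp only [leeWeight_eq, ← AddChar.map_add_eq_mul, Finset.sum_sub_distrib]
  simp

theorem sum_ite_sum_leeWeight_add {V : Type*} [Fintype V] (f : V → ZMod 4) (i : ℕ) :
    ∑ κ : ZMod 4, (if ∑ x, leeWeight (f x + κ) = i then 1 else 0 : ℕ) =
      ∑ κ : ZMod 4, if ((∑ x, iChar (f x)) * iChar κ).re = Fintype.card V - i then 1 else 0 := by
  refine Finset.sum_congr rfl fun κ _ => if_congr ?_ rfl rfl
  rw [← Nat.cast_inj (R := ℤ), sum_leeWeight_add]
  omega

theorem sum_ite_re_mul_iChar (S : GaussianInt) (t : ℤ) :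
    ∑ κ : ZMod 4, (if (S * iChar κ).re = t then 1 else 0 : ℕ) =
      (if S.re = t then 1 else 0) + (if -S.im = t then 1 else 0) + (if -S.re = t then 1 else 0) +
        (if S.im = t then 1 else 0) := by
  refine (Fin.sum_univ_four _).trans ?_
  have h0 : iChar (0 : Fin 4) = 1 := rfl
  have h1 : iChar (1 : Fin 4) = ⟨0, 1⟩ := rfl
  have h2 : iChar (2 : Fin 4) = ⟨-1, 0⟩ := rfl
  have h3 : iChar (3 : Fin 4) = ⟨0, -1⟩ := rfl
  simp [h0, h1, h2, h3, Zsqrtd.re_mul]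

theorem sum_iChar_twoLift_eq_zero {V : Type*} [AddGroup V] [Fintype V] {f : V →+ ZMod 2}
    (hf : f ≠ 0) : ∑ y, iChar (twoLift (f y)) = 0 := by
  refine AddChar.sum_eq_zero_of_ne_one (ψ := iChar.compAddMonoidHom (twoLift.comp f)) ?_
  intro h
  apply hf
  ext y
  simpa [iChar_twoLift_eq_one_iff] using DFunLike.congr_fun h y

theorem sum_iChar_mul_star {V : Type*} [AddCommGroup V] [Module (ZMod 2) V] [Fintype V]
    [DecidableEq V] {B : LinearMap.BilinForm (ZMod 2) V} (hB : B.SeparatingLeft)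
    {d : V → ZMod 4} (hd : ∀ x y, d (x + y) = d x + d y + twoLift (B x y)) :
    (∑ x, iChar (d x)) * star (∑ x, iChar (d x)) = Fintype.card V := by
  have hd0 : d 0 = 0 := by simpa using hd 0 0
  have hshift : ∀ y, ∑ x, iChar (d x) * star (iChar (d y)) =
      ∑ u, iChar (d u) * iChar (twoLift (B u y)) := by
    intro y
    rw [← Fintype.sum_equiv (Equiv.addRight y) (fun u => iChar (d (u + y)) * star (iChar (d y))) _
      fun _ => rfl]
    refine Finset.sum_congr rfl fun u _ => ?_
    rw [star_iChar, hd, ← AddChar.map_add_eq_mul, ← AddChar.map_add_eq_mul]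
    congr 1
    ring
  have hinner : ∀ u, ∑ y, iChar (twoLift (B u y)) =
      if u = 0 then (Fintype.card V : GaussianInt) else 0 := by
    intro u
    split_ifs with hu
    · simp [hu]
    · exact sum_iChar_twoLift_eq_zero (f := (B u).toAddMonoidHom) fun h => hu <| hB u fun y => by
        simpa using DFunLike.congr_fun h y
  calc (∑ x, iChar (d x)) * star (∑ x, iChar (d x))
      = ∑ y, ∑ x, iChar (d x) * star (iChar (d y)) := by
        rw [star_sum, Finset.sum_mul_sum, Finset.sum_comm]
    _ = ∑ u, iChar (d u) * ∑ y, iChar (twoLift (B u y)) := by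
        simp only [hshift, Finset.mul_sum]
        exact Finset.sum_comm
    _ = Fintype.card V := by
        simp [hinner, hd0]

section Code

variable {n : Type*} [Fintype n] [DecidableEq n]

theorem card_vector_zmod_two : Fintype.card (n → ZMod 2) = 2 ^ Fintype.card n := by
  simp

theorem sum_ite_weight_kerdockFun_zero_zero (i : ℕ) :
    ∑ κ : ZMod 4, (if ∑ x, leeWeight (kerdockFun (0 : Matrix n n (ZMod 2)) 0 x + κ) = i
      then 1 else 0 : ℕ) =
      (if i = 0 then 1 else 0) + 2 * (if i = 2 ^ Fintype.card n then 1 else 0) +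
        (if i = 2 * 2 ^ Fintype.card n then 1 else 0) := by
  have hS : ∑ x, iChar (kerdockFun (0 : Matrix n n (ZMod 2)) 0 x) =
      ((2 ^ Fintype.card n : ℕ) : GaussianInt) := by
    simp [kerdockFun_zero_matrix]
  rw [sum_ite_sum_leeWeight_add, sum_ite_re_mul_iChar, hS, card_vector_zmod_two]
  rw [Zsqrtd.re_natCast, Zsqrtd.im_natCast]
  split_ifs <;> omega

theorem sum_ite_weight_kerdockFun_zero_of_ne {w : n → ZMod 2} (hw : w ≠ 0) (i : ℕ) :
    ∑ κ : ZMod 4, (if ∑ x, leeWeight (kerdockFun (0 : Matrix n n (ZMod 2)) w x + κ) = i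
      then 1 else 0 : ℕ) = 4 * (if i = 2 ^ Fintype.card n then 1 else 0) := by
  have hS : ∑ x, iChar (kerdockFun (0 : Matrix n n (ZMod 2)) w x) = 0 := by
    simp only [kerdockFun_zero_matrix]
    refine sum_iChar_twoLift_eq_zero (f := AddMonoidHom.mk' (w ⬝ᵥ ·) (dotProduct_add w)) ?_
    intro h
    exact hw (funext fun j => by simpa using DFunLike.congr_fun h (Pi.single j 1))
  rw [sum_ite_sum_leeWeight_add, sum_ite_re_mul_iChar, hS, Zsqrtd.re_zero, Zsqrtd.im_zero,
    card_vector_zmod_two]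
  split_ifs <;> omega

theorem abs_re_sum_iChar_kerdockFun {P : Matrix n n (ZMod 2)} (hP : P.IsSymm)
    (hsep : P.SeparatingLeft) {k : ℕ} (hn : Fintype.card n = 2 * k + 1) (w : n → ZMod 2) :
    |(∑ x, iChar (kerdockFun P w x)).re| = 2 ^ k ∧
      |(∑ x, iChar (kerdockFun P w x)).im| = 2 ^ k := by
  have hnorm := sum_iChar_mul_star (Matrix.separatingLeft_toBilin'_iff.mpr hsep)
    (d := kerdockFun P w) fun x y => by rw [kerdockFun_add hP, toBilin'_apply']
  have hre := congrArg Zsqrtd.re hnorm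
  simp only [Zsqrtd.re_mul, Zsqrtd.re_star, Zsqrtd.im_star, card_vector_zmod_two, hn,
    Zsqrtd.re_natCast] at hre
  exact Int.abs_eq_two_pow_of_sq_add_sq_eq (by push_cast at hre; linear_combination hre)

theorem sum_ite_weight_kerdockFun_of_separatingLeft {P : Matrix n n (ZMod 2)} (hP : P.IsSymm)
    (hsep : P.SeparatingLeft) {k : ℕ} (hn : Fintype.card n = 2 * k + 1) (w : n → ZMod 2)
    (i : ℕ) :
    ∑ κ : ZMod 4, (if ∑ x, leeWeight (kerdockFun P w x + κ) = i then 1 else 0 : ℕ) =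
      2 * (if i = 2 ^ Fintype.card n - 2 ^ k then 1 else 0) +
        2 * (if i = 2 ^ Fintype.card n + 2 ^ k then 1 else 0) := by
  obtain ⟨hre, him⟩ := abs_re_sum_iChar_kerdockFun hP hsep hn w
  have hk : 2 ^ k ≤ 2 ^ Fintype.card n := Nat.pow_le_pow_right two_pos (by omega)
  rw [sum_ite_sum_leeWeight_add, sum_ite_re_mul_iChar, card_vector_zmod_two]
  rw [show (2 : ℤ) ^ k = ((2 ^ k : ℕ) : ℤ) by norm_cast] at hre him
  generalize 2 ^ k = a at *
  generalize 2 ^ Fintype.card n = N at *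
  rcases (abs_eq (by positivity)).1 hre with hr | hr <;>
    rcases (abs_eq (by positivity)).1 him with hi | hi <;>
    · rw [hr, hi]
      split_ifs <;> omega

variable {Z : Type*}

def codeword (P : Z → Matrix n n (ZMod 2)) (p : Z × (n → ZMod 2) × ZMod 4) (x : n → ZMod 2) :
    ZMod 4 :=
  kerdockFun (P p.1) p.2.1 x + p.2.2

theorem codeword_injective {P : Z → Matrix n n (ZMod 2)} (hP : ∀ z, (P z).IsSymm)
    (hinj : Function.Injective P) : Function.Injective (codeword P) := by
  rintro ⟨z, w, κ⟩ ⟨z', w', κ'⟩ h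
  obtain rfl : κ = κ' := by simpa [codeword, kerdockFun_zero] using congrFun h 0
  obtain ⟨hzz, rfl⟩ := eq_and_eq_of_kerdockFun_eq (hP z) (hP z')
    (funext fun x => add_right_cancel (congrFun h x))
  rw [hinj hzz]

-- The summands count the words with `(z, w) = (z₀, 0)`, with `z = z₀, w ≠ 0`, and with `z ≠ z₀`.
theorem card_codeword_weight [Fintype Z] [DecidableEq Z] {P : Z → Matrix n n (ZMod 2)}
    (hP : ∀ z, (P z).IsSymm) (hinj : Function.Injective P) {z₀ : Z} (hz₀ : P z₀ = 0)
    (hsep : ∀ z, z ≠ z₀ → (P z).SeparatingLeft) {k : ℕ} (hn : Fintype.card n = 2 * k + 1)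
    (i : ℕ) :
    Nat.card {c // c ∈ Set.range (codeword P) ∧ ∑ x, leeWeight (c x) = i} =
      (if i = 0 then 1 else 0) + 2 * (if i = 2 ^ Fintype.card n then 1 else 0) +
        (if i = 2 * 2 ^ Fintype.card n then 1 else 0) +
      (2 ^ Fintype.card n - 1) * (4 * (if i = 2 ^ Fintype.card n then 1 else 0)) +
      (Fintype.card Z - 1) * 2 ^ Fintype.card n *
        (2 * (if i = 2 ^ Fintype.card n - 2 ^ k then 1 else 0) +
          2 * (if i = 2 ^ Fintype.card n + 2 ^ k then 1 else 0)) := by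
  rw [Nat.card_subtype_mem_range_and (codeword_injective hP hinj), Nat.card_eq_fintype_card,
    Fintype.card_subtype, Finset.card_filter, Fintype.sum_prod_type,
    Fintype.sum_eq_add_sum_compl z₀]
  simp only [Fintype.sum_prod_type, codeword]
  congr 1
  · rw [hz₀, Fintype.sum_eq_add_sum_compl 0, sum_ite_weight_kerdockFun_zero_zero,
      Finset.sum_congr rfl fun w hw =>
        sum_ite_weight_kerdockFun_zero_of_ne (by simpa using hw) i]
    rw [Finset.sum_const, Finset.card_compl, Finset.card_singleton, card_vector_zmod_two,
      smul_eq_mul]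
  · rw [Finset.sum_congr rfl fun z hz => Finset.sum_congr rfl fun w _ =>
      sum_ite_weight_kerdockFun_of_separatingLeft (hP z) (hsep z (by simpa using hz)) hn w i]
    simp [Finset.card_compl, mul_assoc]

end Code

section TraceForms

variable {ι K F : Type*} [Fintype ι] [Field K] [Field F] [Algebra K F]
  {e : (ι → K) ≃ₗ[K] F} {P : F → Matrix ι ι K}

theorem isSymm_of_dotProduct_mulVec_eq_trace [DecidableEq ι]
    (hP : ∀ z u y, u ⬝ᵥ P z *ᵥ y = Algebra.trace K F (z * e u * e y)) (z : F) : (P z).IsSymm :=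
  Matrix.toBilin'.injective <| LinearMap.ext₂ fun u y => by
    rw [toBilin'_apply', toBilin'_apply', dotProduct_transpose_mulVec, hP, hP]
    ring_nf

theorem eq_zero_of_dotProduct_mulVec_eq_trace [DecidableEq ι]
    (hP : ∀ z u y, u ⬝ᵥ P z *ᵥ y = Algebra.trace K F (z * e u * e y)) : P 0 = 0 :=
  Matrix.toBilin'.injective <| LinearMap.ext₂ fun u y => by
    simp [toBilin'_apply', hP]

theorem dotProduct_traceMatrix_mulVec (b : Module.Basis ι K F) {W : Matrix ι ι K}
    (hW : ∀ i j, W i j = Algebra.trace K F (b i * b j)) (u y : ι → K) :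
    u ⬝ᵥ W *ᵥ y = Algebra.trace K F (b.equivFun.symm u * b.equivFun.symm y) := by
  rw [Module.Basis.equivFun_symm_apply, Module.Basis.equivFun_symm_apply, Finset.sum_mul_sum,
    map_sum]
  simp only [dotProduct, mulVec, Finset.mul_sum, map_sum, hW]
  refine Finset.sum_congr rfl fun i _ => Finset.sum_congr rfl fun j _ => ?_
  rw [smul_mul_smul_comm, map_smul, smul_eq_mul]
  ring

theorem dotProduct_mul_traceMatrix_mulVec (b : Module.Basis ι K F) {W : Matrix ι ι K}
    (hW : ∀ i j, W i j = Algebra.trace K F (b i * b j)) {A : Matrix ι ι K} {z : F}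
    (hA : ∀ v, b.equivFun.symm (v ᵥ* A) = b.equivFun.symm v * z) (u y : ι → K) :
    u ⬝ᵥ (A * W) *ᵥ y = Algebra.trace K F (z * b.equivFun.symm u * b.equivFun.symm y) := by
  rw [← mulVec_mulVec, dotProduct_mulVec, dotProduct_traceMatrix_mulVec b hW, hA]
  ring_nf

variable [FiniteDimensional K F] [Algebra.IsSeparable K F]

theorem exists_trace_mul_ne_zero {β : F} (hβ : β ≠ 0) : ∃ c, Algebra.trace K F (β * c) ≠ 0 := by
  by_contra! h
  exact hβ <| (traceForm_nondegenerate K F).1 β fun c => by simpa using h c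

theorem separatingLeft_of_dotProduct_mulVec_eq_trace
    (hP : ∀ z u y, u ⬝ᵥ P z *ᵥ y = Algebra.trace K F (z * e u * e y)) {z : F} (hz : z ≠ 0) :
    (P z).SeparatingLeft := by
  rw [separatingLeft_def]
  intro u hu
  by_contra hu0
  obtain ⟨c, hc⟩ := exists_trace_mul_ne_zero (K := K)
    (mul_ne_zero hz ((map_ne_zero_iff e e.injective).2 hu0))
  exact hc (by simpa [hP] using hu (e.symm c))

theorem injective_of_dotProduct_mulVec_eq_trace
    (hP : ∀ z u y, u ⬝ᵥ P z *ᵥ y = Algebra.trace K F (z * e u * e y)) : Function.Injective P := by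
  intro z z' h
  by_contra hne
  obtain ⟨c, hc⟩ := exists_trace_mul_ne_zero (K := K) (sub_ne_zero.2 hne)
  have := hP z (e.symm 1) (e.symm c)
  rw [h, hP] at this
  simp only [LinearEquiv.apply_symm_apply, mul_one] at this
  apply hc
  rw [sub_mul, map_sub, this, sub_self]

end TraceForms

theorem weight_distribution_of_count {m k : ℕ} (hk : m = 2 * k + 1) {A : ℕ → ℕ}
    (hA : ∀ i, A i =
      (if i = 0 then 1 else 0) + 2 * (if i = 2 ^ m then 1 else 0) +
        (if i = 2 * 2 ^ m then 1 else 0) +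
      (2 ^ m - 1) * (4 * (if i = 2 ^ m then 1 else 0)) +
      (2 ^ m - 1) * 2 ^ m *
        (2 * (if i = 2 ^ m - 2 ^ k then 1 else 0) + 2 * (if i = 2 ^ m + 2 ^ k then 1 else 0))) :
    A 0 = 1 ∧ A (2 ^ (m + 1)) = 1 ∧ A (2 ^ m) = 2 ^ (m + 2) - 2 ∧
    A (2 ^ m - 2 ^ k) = 2 ^ (2 * m + 1) - 2 ^ (m + 1) ∧
    A (2 ^ m + 2 ^ k) = 2 ^ (2 * m + 1) - 2 ^ (m + 1) ∧
    (∀ i : ℕ, i ≠ 0 → i ≠ 2 ^ (m + 1) → i ≠ 2 ^ m →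
      i ≠ 2 ^ m - 2 ^ k → i ≠ 2 ^ m + 2 ^ k → A i = 0) := by
  have hk1 : 1 ≤ 2 ^ k := Nat.one_le_two_pow
  have hkm : 2 ^ k < 2 ^ m := Nat.pow_lt_pow_right one_lt_two (by omega)
  have hsq : 2 ^ (2 * m + 1) - 2 ^ (m + 1) = 2 * ((2 ^ m - 1) * 2 ^ m) := by
    rw [Nat.sub_mul, one_mul, Nat.mul_sub, pow_succ, pow_succ, two_mul m, pow_add]
    ring_nf
  rw [hsq, show 2 ^ (m + 2) = 4 * 2 ^ m by ring, show 2 ^ (m + 1) = 2 * 2 ^ m by ring]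
  simp only [hA]
  clear hsq hA hk
  generalize (2 ^ m - 1) * 2 ^ m = Q
  generalize 2 ^ k = a at *
  generalize 2 ^ m = N at *
  refine ⟨?_, ?_, ?_, ?_, ?_, fun i h0 h1 h2 h3 h4 => ?_⟩ <;> split_ifs <;> omega

end Kerdock

open Kerdock in
theorem kerdock_weight_distribution_general
    (m : ℕ) (hm : Odd m) (F : Type) [Field F] [Algebra (ZMod 2) F]
    (α : F) (bas : Module.Basis (Fin m) (ZMod 2) F)
    (hbas : ∀ i : Fin m, bas i = α ^ (i : ℕ))
    (W : Matrix (Fin m) (Fin m) (ZMod 2))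
    (hW : ∀ i j, W i j = Algebra.trace (ZMod 2) F (α ^ (i : ℕ) * α ^ (j : ℕ)))
    (Amul : F → Matrix (Fin m) (Fin m) (ZMod 2))
    (hAmul : ∀ (w : F) (v : Fin m → ZMod 2),
      (∑ i, Matrix.vecMul v (Amul w) i • α ^ (i : ℕ)) = (∑ i, v i • α ^ (i : ℕ)) * w)
    -- the Z₄-linear Kerdock code K(m)
    (K : Set ((Fin m → ZMod 2) → ZMod 4))
    (hK : K = {c | ∃ (z : F) (w : Fin m → ZMod 2) (κ : ZMod 4), c = fun x =>
      (((∑ i, ∑ j, (x i).val * ((Amul z * W) i j).val * (x j).val) +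
          2 * ∑ i, (w i).val * (x i).val : ℕ) : ZMod 4) + κ})
    -- the Gray map
    (gray : ZMod 4 → ZMod 2 × ZMod 2)
    (hgray : gray 0 = (0, 0) ∧ gray 1 = (0, 1) ∧ gray 2 = (1, 1) ∧ gray 3 = (1, 0))
    -- Hamming weight of the Gray image of a Z₄-valued codeword
    (wt : ((Fin m → ZMod 2) → ZMod 4) → ℕ)
    (hwt : ∀ c, wt c = ∑ x : Fin m → ZMod 2,
      ((if (gray (c x)).1 = 0 then 0 else 1) + (if (gray (c x)).2 = 0 then 0 else 1)))
    -- the weight distribution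
    (Awt : ℕ → ℕ)
    (hAwt : ∀ i, Awt i = Nat.card {c : (Fin m → ZMod 2) → ZMod 4 // c ∈ K ∧ wt c = i}) :
    Awt 0 = 1 ∧
    Awt (2 ^ (m + 1)) = 1 ∧
    Awt (2 ^ m) = 2 ^ (m + 2) - 2 ∧
    Awt (2 ^ m - 2 ^ ((m - 1) / 2)) = 2 ^ (2 * m + 1) - 2 ^ (m + 1) ∧
    Awt (2 ^ m + 2 ^ ((m - 1) / 2)) = 2 ^ (2 * m + 1) - 2 ^ (m + 1) ∧
    (∀ i : ℕ, i ≠ 0 → i ≠ 2 ^ (m + 1) → i ≠ 2 ^ m →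
      i ≠ 2 ^ m - 2 ^ ((m - 1) / 2) → i ≠ 2 ^ m + 2 ^ ((m - 1) / 2) → Awt i = 0) := by
  classical
  obtain ⟨k, rfl⟩ := hm
  rw [show (2 * k + 1 - 1) / 2 = k by omega]
  have : Fintype F := Module.fintypeOfFintype bas
  have : FiniteDimensional (ZMod 2) F := Module.Finite.of_basis bas
  have hP : ∀ z u y, u ⬝ᵥ (Amul z * W) *ᵥ y =
      Algebra.trace (ZMod 2) F (z * bas.equivFun.symm u * bas.equivFun.symm y) :=
    fun z => dotProduct_mul_traceMatrix_mulVec bas (by simpa [hbas] using hW)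
      fun v => by simpa [Module.Basis.equivFun_symm_apply, hbas] using hAmul z v
  have hcode : K = Set.range (codeword fun z => Amul z * W) := by
    rw [hK]
    ext c
    simp only [Set.mem_ofPred_eq, Set.mem_range, Prod.exists, natCast_sum_eq_kerdockFun]
    exact exists₃_congr fun z w κ => eq_comm
  have hwt' : wt = fun c => ∑ x, leeWeight (c x) :=
    funext fun c => by simp [hwt, leeWeight_eq_gray hgray]
  refine weight_distribution_of_count rfl fun i => ?_
  rw [hAwt, hcode, hwt', card_codeword_weight (isSymm_of_dotProduct_mulVec_eq_trace hP)
    (injective_of_dotProduct_mulVec_eq_trace hP) (eq_zero_of_dotProduct_mulVec_eq_trace hP)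
    (fun z hz => separatingLeft_of_dotProduct_mulVec_eq_trace hP hz) (Fintype.card_fin _) i,
    Fintype.card_fin, Module.card_fintype bas, ZMod.card, Fintype.card_fin]

/-- Weight distribution of the binary Kerdock code of length `2^{m+1}` (`m` odd):
`A_0 = A_{2^{m+1}} = 1`, `A_{2^m} = 2^{m+2} - 2`,
`A_{2^m ± 2^{(m-1)/2}} = 2^{2m+1} - 2^{m+1}`, and all other `A_i = 0`. -/
theorem kerdock_weight_distribution
    (m : ℕ) (hm : Odd m) (F : Type) [Field F] [Algebra (ZMod 2) F]
    (α : F) (bas : Module.Basis (Fin m) (ZMod 2) F)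
    (hbas : ∀ i : Fin m, bas i = α ^ (i : ℕ))
    (hα : ∀ x : F, x ≠ 0 → ∃ k : ℕ, x = α ^ k)
    (W : Matrix (Fin m) (Fin m) (ZMod 2))
    (hW : ∀ i j, W i j = Algebra.trace (ZMod 2) F (α ^ (i : ℕ) * α ^ (j : ℕ)))
    (Amul : F → Matrix (Fin m) (Fin m) (ZMod 2))
    (hAmul : ∀ (w : F) (v : Fin m → ZMod 2),
      (∑ i, Matrix.vecMul v (Amul w) i • α ^ (i : ℕ)) = (∑ i, v i • α ^ (i : ℕ)) * w)
    -- the Z₄-linear Kerdock code K(m)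
    (K : Set ((Fin m → ZMod 2) → ZMod 4))
    (hK : K = {c | ∃ (z : F) (w : Fin m → ZMod 2) (κ : ZMod 4), c = fun x =>
      (((∑ i, ∑ j, (x i).val * ((Amul z * W) i j).val * (x j).val) +
          2 * ∑ i, (w i).val * (x i).val : ℕ) : ZMod 4) + κ})
    -- the Gray map
    (gray : ZMod 4 → ZMod 2 × ZMod 2)
    (hgray : gray 0 = (0, 0) ∧ gray 1 = (0, 1) ∧ gray 2 = (1, 1) ∧ gray 3 = (1, 0))
    -- Hamming weight of the Gray image of a Z₄-valued codeword
    (wt : ((Fin m → ZMod 2) → ZMod 4) → ℕ)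
    (hwt : ∀ c, wt c = ∑ x : Fin m → ZMod 2,
      ((if (gray (c x)).1 = 0 then 0 else 1) + (if (gray (c x)).2 = 0 then 0 else 1)))
    -- the weight distribution
    (Awt : ℕ → ℕ)
    (hAwt : ∀ i, Awt i = Nat.card {c : (Fin m → ZMod 2) → ZMod 4 // c ∈ K ∧ wt c = i}) :
    Awt 0 = 1 ∧
    Awt (2 ^ (m + 1)) = 1 ∧
    Awt (2 ^ m) = 2 ^ (m + 2) - 2 ∧
    Awt (2 ^ m - 2 ^ ((m - 1) / 2)) = 2 ^ (2 * m + 1) - 2 ^ (m + 1) ∧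
    Awt (2 ^ m + 2 ^ ((m - 1) / 2)) = 2 ^ (2 * m + 1) - 2 ^ (m + 1) ∧
    (∀ i : ℕ, i ≠ 0 → i ≠ 2 ^ (m + 1) → i ≠ 2 ^ m →
      i ≠ 2 ^ m - 2 ^ ((m - 1) / 2) → i ≠ 2 ^ m + 2 ^ ((m - 1) / 2) → Awt i = 0) :=
  kerdock_weight_distribution_general m hm F α bas hbas W hW Amul hAmul K hK gray hgray wt hwt Awt
    hAwt
end

section
/- The Heisenberg-Weyl graph H_N, whose N^2 − 1 vertices are the nonzero vectors [a,b] ∈ F_2^{2m}, with [a,b] ~ [c,d] joined iff a·d^T + b·c^T = 0 over F_2, is strongly regular with parameters n = N^2 − 1, t = N^2/2 − 2, λ = N^2/4 − 3, μ = N^2/4 − 1, where N = 2^m. -/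
open BigOperators Finset

namespace HWaux

variable {m : ℕ}

abbrev V (m : ℕ) := (Fin m → ZMod 2) × (Fin m → ZMod 2)

def B (p q : V m) : ZMod 2 := ∑ i, (q.1 i * p.2 i + q.2 i * p.1 i)

lemma B_symm (p q : V m) : B p q = B q p := by
  unfold B; exact Finset.sum_congr rfl fun i _ => by ring

lemma B_self (p : V m) : B p p = 0 := by
  unfold B
  refine Finset.sum_eq_zero fun i _ => ?_
  have : ∀ a b : ZMod 2, a * b + b * a = 0 := by decide
  exact this _ _

lemma B_zero_right (p : V m) : B p 0 = 0 := by
  simp [B]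

def φ (p : V m) : V m →ₗ[ZMod 2] ZMod 2 where
  toFun q := B p q
  map_add' q r := by
    unfold B
    rw [← Finset.sum_add_distrib]
    exact Finset.sum_congr rfl fun i _ => by
      simp [Prod.fst_add, Prod.snd_add]; ring
  map_smul' c q := by
    unfold B
    simp only [Prod.smul_fst, Prod.smul_snd, Pi.smul_apply, smul_eq_mul,
      RingHom.id_apply, Finset.mul_sum]
    exact Finset.sum_congr rfl fun i _ => by ring

lemma B_add_left (p q r : V m) : B (p + q) r = B p r + B q r := by
  unfold B
  rw [← Finset.sum_add_distrib]
  exact Finset.sum_congr rfl fun i _ => by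
    simp [Prod.fst_add, Prod.snd_add]; ring

lemma exists_B_eq_one (p : V m) (hp : p ≠ 0) : ∃ q, B p q = 1 := by
  have h1 : ∀ a : ZMod 2, a ≠ 0 → a = 1 := by decide
  rcases (by
    by_contra h
    push_neg at h
    exact hp (Prod.ext (funext fun i => (h i).1) (funext fun i => (h i).2)) :
    ∃ i, p.1 i ≠ 0 ∨ p.2 i ≠ 0) with ⟨i, hi⟩
  rcases hi with hi | hi
  · refine ⟨(0, Pi.single i 1), ?_⟩
    unfold B
    simp [Pi.single_apply, h1 _ hi]
  · refine ⟨(Pi.single i 1, 0), ?_⟩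
    unfold B
    simp [Pi.single_apply, h1 _ hi]

lemma add_self (q : V m) : q + q = 0 := by
  have h : ∀ a : ZMod 2, a + a = 0 := by decide
  ext i <;> simp [h]

def ψ (p q : V m) : V m →ₗ[ZMod 2] ZMod 2 × ZMod 2 := (φ p).prod (φ q)

lemma psi_surj (p q : V m) (hp : p ≠ 0) (hq : q ≠ 0) (hpq : p ≠ q) :
    Function.Surjective (ψ p q) := by
  have hpq0 : p + q ≠ 0 := by
    intro h
    apply hpq
    have := congrArg (· + q) h
    simpa [add_assoc, add_self q] using this
  obtain ⟨r1, hr1⟩ := exists_B_eq_one p hp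
  obtain ⟨r2, hr2⟩ := exists_B_eq_one q hq
  obtain ⟨r3, hr3⟩ := exists_B_eq_one (p + q) hpq0
  rw [B_add_left] at hr3
  intro t
  have key : ∀ (a b c : ZMod 2) (t : ZMod 2 × ZMod 2), ∃ c1 c2 c3 : ZMod 2,
      (c1 * 1 + c2 * b + c3 * c, c1 * a + c2 * 1 + c3 * (c + 1)) = t := by decide
  have hc : B q r3 = B p r3 + 1 := by
    have : ∀ x y : ZMod 2, x + y = 1 → y = x + 1 := by decide
    exact this _ _ hr3
  obtain ⟨c1, c2, c3, hcs⟩ := key (B q r1) (B p r2) (B p r3) t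
  refine ⟨c1 • r1 + c2 • r2 + c3 • r3, ?_⟩
  have hψ : ∀ r, ψ p q r = (B p r, B q r) := fun r => rfl
  have expand : ψ p q (c1 • r1 + c2 • r2 + c3 • r3)
      = c1 • ψ p q r1 + c2 • ψ p q r2 + c3 • ψ p q r3 := by
    simp [map_add, map_smul]
  rw [expand, hψ r1, hψ r2, hψ r3, hr1, hr2, hc]
  simpa [Prod.smul_mk, smul_eq_mul, Prod.mk_add_mk] using hcs

lemma card_V : Nat.card (V m) = 2 ^ (2 * m) := by
  simp [Nat.card_eq_fintype_card, two_mul, pow_add]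

lemma card_ker_psi (p q : V m) (hp : p ≠ 0) (hq : q ≠ 0) (hpq : p ≠ q) :
    Nat.card {r : V m // B p r = 0 ∧ B q r = 0} * 4 = 2 ^ (2 * m) := by
  have hs := psi_surj p q hp hq hpq
  have e1 : Nat.card {r : V m // B p r = 0 ∧ B q r = 0}
      = Nat.card (LinearMap.ker (ψ p q)) := by
    refine Nat.card_congr (Equiv.subtypeEquivRight fun r => ?_)
    simp [LinearMap.mem_ker, ψ, LinearMap.prod_apply, Prod.ext_iff]
    rfl
  have e2 : Nat.card (V m ⧸ LinearMap.ker (ψ p q)) = 4 := by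
    rw [Nat.card_congr ((ψ p q).quotKerEquivOfSurjective hs).toEquiv]
    simp [Nat.card_eq_fintype_card]
  calc Nat.card {r : V m // B p r = 0 ∧ B q r = 0} * 4
      = Nat.card (LinearMap.ker (ψ p q)) * Nat.card (V m ⧸ LinearMap.ker (ψ p q)) := by
        rw [e1, e2]
    _ = Nat.card (V m) := (Submodule.card_eq_card_quotient_mul_card _).symm
    _ = 2 ^ (2 * m) := card_V

lemma card_ker_phi (p : V m) (hp : p ≠ 0) :
    Nat.card {r : V m // B p r = 0} * 2 = 2 ^ (2 * m) := by
  have hs : Function.Surjective (φ p) := by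
    intro t
    obtain ⟨r, hr⟩ := exists_B_eq_one p hp
    refine ⟨t • r, ?_⟩
    have h2 : (φ p) (t • r) = t • (φ p) r := map_smul _ _ _
    rw [h2]
    show t • B p r = t
    rw [hr, smul_eq_mul, mul_one]
  have e1 : Nat.card {r : V m // B p r = 0}
      = Nat.card (LinearMap.ker (φ p)) := by
    refine Nat.card_congr (Equiv.subtypeEquivRight fun r => ?_)
    simp [LinearMap.mem_ker]
    rfl
  have e2 : Nat.card (V m ⧸ LinearMap.ker (φ p)) = 2 := by
    rw [Nat.card_congr ((φ p).quotKerEquivOfSurjective hs).toEquiv]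
    simp [Nat.card_eq_fintype_card]
  calc Nat.card {r : V m // B p r = 0} * 2
      = Nat.card (LinearMap.ker (φ p)) * Nat.card (V m ⧸ LinearMap.ker (φ p)) := by
        rw [e1, e2]
    _ = Nat.card (V m) := (Submodule.card_eq_card_quotient_mul_card _).symm
    _ = 2 ^ (2 * m) := card_V

end HWaux

open HWaux

/-- The Heisenberg–Weyl graph on the `N² - 1` nonzero vectors `[a,b] ∈ F_2^{2m}`
(`N = 2^m`, adjacency iff the symplectic inner product vanishes) is strongly
regular with parameters `(N² - 1, N²/2 - 2, N²/4 - 3, N²/4 - 1)`. -/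
theorem heisenbergWeyl_graph_strongly_regular
    (m : ℕ) (hm : 2 ≤ m)
    (adj : ((Fin m → ZMod 2) × (Fin m → ZMod 2)) →
      ((Fin m → ZMod 2) × (Fin m → ZMod 2)) → Prop)
    (hadj : ∀ p q, adj p q ↔
      p ≠ q ∧ (∑ i, (q.1 i * p.2 i + q.2 i * p.1 i) : ZMod 2) = 0) :
    Nat.card {p : (Fin m → ZMod 2) × (Fin m → ZMod 2) // p ≠ 0} = (2 ^ m) ^ 2 - 1 ∧
    (∀ p : (Fin m → ZMod 2) × (Fin m → ZMod 2), p ≠ 0 →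
      Nat.card {q : (Fin m → ZMod 2) × (Fin m → ZMod 2) // q ≠ 0 ∧ adj p q} =
        (2 ^ m) ^ 2 / 2 - 2) ∧
    (∀ p q : (Fin m → ZMod 2) × (Fin m → ZMod 2), p ≠ 0 → q ≠ 0 → adj p q →
      Nat.card {r : (Fin m → ZMod 2) × (Fin m → ZMod 2) //
          r ≠ 0 ∧ adj p r ∧ adj q r} = (2 ^ m) ^ 2 / 4 - 3) ∧
    (∀ p q : (Fin m → ZMod 2) × (Fin m → ZMod 2), p ≠ 0 → q ≠ 0 → p ≠ q →
      ¬ adj p q →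
      Nat.card {r : (Fin m → ZMod 2) × (Fin m → ZMod 2) //
          r ≠ 0 ∧ adj p r ∧ adj q r} = (2 ^ m) ^ 2 / 4 - 1) := by
  have hadjB : ∀ p q : V m, adj p q ↔ p ≠ q ∧ B p q = 0 := hadj
  have hpow2 : (2 ^ m) ^ 2 = 2 ^ (2 * m) := by rw [← pow_mul, mul_comm]
  refine ⟨?_, ?_, ?_, ?_⟩
  · rw [Nat.card_eq_fintype_card, Fintype.card_subtype]
    rw [show (Finset.univ.filter fun p : V m => p ≠ 0) = Finset.univ.erase 0 from
      Finset.filter_ne' Finset.univ 0, Finset.card_erase_of_mem (Finset.mem_univ _),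
      Finset.card_univ]
    congr 1
    simp [sq]
  · intro p hp
    have e : Nat.card {q : V m // q ≠ 0 ∧ adj p q}
        = Nat.card {r : V m // r ≠ 0 ∧ p ≠ r ∧ B p r = 0} :=
      Nat.card_congr (Equiv.subtypeEquivRight fun r => by rw [hadjB])
    rw [e, Nat.card_eq_fintype_card, Fintype.card_subtype]
    have hset : (Finset.univ.filter fun r : V m => r ≠ 0 ∧ p ≠ r ∧ B p r = 0)
        = (Finset.univ.filter fun r : V m => B p r = 0) \ {0, p} := by
      ext r
      simp only [mem_filter, mem_univ, true_and, mem_sdiff, mem_insert,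
        mem_singleton, not_or]
      constructor
      · rintro ⟨h0, hp', hB1⟩
        exact ⟨hB1, h0, fun h => hp' h.symm⟩
      · rintro ⟨hB1, h0, hp'⟩
        exact ⟨h0, fun h => hp' h.symm, hB1⟩
    have hsub : ({0, p} : Finset (V m)) ⊆
        Finset.univ.filter fun r : V m => B p r = 0 := by
      intro r hr
      simp only [mem_insert, mem_singleton] at hr
      rcases hr with rfl | rfl <;> simp [B_zero_right, B_self]
    have hK : (Finset.univ.filter fun r : V m => B p r = 0).card * 2 = 2 ^ (2 * m) := by
      rw [← card_ker_phi p hp, Nat.card_eq_fintype_card, Fintype.card_subtype]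
    rw [hset, Finset.card_sdiff_of_subset hsub]
    have hc2 : ({0, p} : Finset (V m)).card = 2 := by
      rw [Finset.card_insert_of_notMem (by simpa using (Ne.symm hp)),
        Finset.card_singleton]
    rw [hc2, hpow2]
    omega
  · intro p q hp hq hpq
    rw [hadjB] at hpq
    obtain ⟨hne, hB0⟩ := hpq
    have e : Nat.card {r : V m // r ≠ 0 ∧ adj p r ∧ adj q r}
        = Nat.card {r : V m // r ≠ 0 ∧ (p ≠ r ∧ B p r = 0) ∧ (q ≠ r ∧ B q r = 0)} :=
      Nat.card_congr (Equiv.subtypeEquivRight fun r => by rw [hadjB, hadjB])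
    rw [e, Nat.card_eq_fintype_card, Fintype.card_subtype]
    have hset : (Finset.univ.filter fun r : V m =>
          r ≠ 0 ∧ (p ≠ r ∧ B p r = 0) ∧ (q ≠ r ∧ B q r = 0))
        = (Finset.univ.filter fun r : V m => B p r = 0 ∧ B q r = 0) \ {0, p, q} := by
      ext r
      simp only [mem_filter, mem_univ, true_and, mem_sdiff, mem_insert,
        mem_singleton, not_or]
      constructor
      · rintro ⟨h0, ⟨hp', hB1⟩, hq', hB2⟩
        exact ⟨⟨hB1, hB2⟩, h0, fun h => hp' h.symm, fun h => hq' h.symm⟩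
      · rintro ⟨⟨hB1, hB2⟩, h0, hp', hq'⟩
        exact ⟨h0, ⟨fun h => hp' h.symm, hB1⟩, fun h => hq' h.symm, hB2⟩
    have hsub : ({0, p, q} : Finset (V m)) ⊆
        Finset.univ.filter fun r : V m => B p r = 0 ∧ B q r = 0 := by
      intro r hr
      simp only [mem_insert, mem_singleton] at hr
      simp only [mem_filter, mem_univ, true_and]
      rcases hr with h | h | h <;> rw [h]
      · exact ⟨B_zero_right p, B_zero_right q⟩
      · exact ⟨B_self p, (B_symm q p).trans hB0⟩
      · exact ⟨hB0, B_self q⟩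
    have hK : (Finset.univ.filter fun r : V m => B p r = 0 ∧ B q r = 0).card * 4
        = 2 ^ (2 * m) := by
      rw [← card_ker_psi p q hp hq hne, Nat.card_eq_fintype_card, Fintype.card_subtype]
    rw [hset, Finset.card_sdiff_of_subset hsub]
    have hc3 : ({0, p, q} : Finset (V m)).card = 3 := by
      rw [Finset.card_insert_of_notMem (by simp [Ne.symm hp, Ne.symm hq]),
        Finset.card_insert_of_notMem (by simpa using hne), Finset.card_singleton]
    rw [hc3, hpow2]
    omega
  · intro p q hp hq hne hnadj
    rw [hadjB] at hnadj
    push_neg at hnadj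
    have hB1 : B p q ≠ 0 := hnadj hne
    have e : Nat.card {r : V m // r ≠ 0 ∧ adj p r ∧ adj q r}
        = Nat.card {r : V m // r ≠ 0 ∧ (p ≠ r ∧ B p r = 0) ∧ (q ≠ r ∧ B q r = 0)} :=
      Nat.card_congr (Equiv.subtypeEquivRight fun r => by rw [hadjB, hadjB])
    rw [e, Nat.card_eq_fintype_card, Fintype.card_subtype]
    have hset : (Finset.univ.filter fun r : V m =>
          r ≠ 0 ∧ (p ≠ r ∧ B p r = 0) ∧ (q ≠ r ∧ B q r = 0))
        = (Finset.univ.filter fun r : V m => B p r = 0 ∧ B q r = 0) \ {0} := by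
      ext r
      simp only [mem_filter, mem_univ, true_and, mem_sdiff, mem_singleton]
      constructor
      · rintro ⟨h0, ⟨hp', hB1'⟩, hq', hB2⟩
        exact ⟨⟨hB1', hB2⟩, h0⟩
      · rintro ⟨⟨hB1', hB2⟩, h0⟩
        refine ⟨h0, ⟨?_, hB1'⟩, ?_, hB2⟩
        · rintro rfl
          exact hB1 (B_symm p q ▸ hB2)
        · rintro rfl
          exact hB1 hB1'
    have hsub : ({0} : Finset (V m)) ⊆
        Finset.univ.filter fun r : V m => B p r = 0 ∧ B q r = 0 := by
      intro r hr
      simp only [mem_singleton] at hr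
      subst hr
      simp [B_zero_right]
    have hK : (Finset.univ.filter fun r : V m => B p r = 0 ∧ B q r = 0).card * 4
        = 2 ^ (2 * m) := by
      rw [← card_ker_psi p q hp hq hne, Nat.card_eq_fintype_card, Fintype.card_subtype]
    rw [hset, Finset.card_sdiff_of_subset hsub, Finset.card_singleton, hpow2]
    omega
end

section
/- Let a,b,c,d ∈ F_{2^m} with ad + bc = 1 and c ≠ 0. Then the 2m×2m binary matrix F = [[A_d^2, A_b^2 W],[W^{−1} A_c^2, (A_a^2)^T]] is symplectic (F Ω F^T = Ω), and for every z ∈ F_{2^m} the row space of [I_m | A_z^2 W] F equals the row space of [I_m | A_{(az+b)/(cz+d)}^2 W] (interpreting z = ∞ appropriately when cz + d = 0). -/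
/-!
Squaring is the Frobenius endomorphism in characteristic 2, so `φ x = A_x²` is a ring
homomorphism `F →+* Matrix (Fin m) (Fin m) (ZMod 2)`, and since multiplication is self-adjoint
for the trace form, `φ x * W = W * (φ x)ᵀ`. With these two facts, `[I | φ z W] F` equals
`[φ (cz+d) | φ (az+b) W]`. When `cz + d ≠ 0` this is `φ (cz+d) [I | φ ((az+b)/(cz+d)) W]`; when
`cz + d = 0` it is `φ (az+b) W [0 | I]`, where `az + b ≠ 0` because the determinant is nonzero.
Row spaces do not change under invertible left factors. That `F` is symplectic is a block
computation that uses `ad + bc = 1` and `2 = 0`.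
-/

open Matrix

theorem Matrix.span_range_row_mul_of_isUnit {R m n : Type*} [CommRing R] [Fintype m]
    [DecidableEq m] {X : Matrix m m R} (hX : IsUnit X) (A : Matrix m n R) :
    Submodule.span R (Set.range (X * A).row) = Submodule.span R (Set.range A.row) := by
  have hcomp : (X * A).vecMulLinear = A.vecMulLinear ∘ₗ X.vecMulLinear :=
    LinearMap.ext fun v => (vecMul_vecMul v X A).symm
  rw [← range_vecMulLinear, ← range_vecMulLinear, hcomp,
    LinearMap.range_comp_of_range_eq_top]
  exact LinearMap.range_eq_top.2 (vecMul_surjective_iff_isUnit.2 hX)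

namespace Algebra

variable {K F ι : Type*} [CommRing K] [CommRing F] [Algebra K F] [Fintype ι] [DecidableEq ι]
  (b : Module.Basis ι K F)

/-- The matrix of multiplication by `x` acting on coordinate row vectors. -/
noncomputable def transposeLeftMulMatrix : F →+* Matrix ι ι K where
  toFun x := (leftMulMatrix b x)ᵀ
  map_one' := by simp
  map_mul' x y := by rw [mul_comm, map_mul, transpose_mul]
  map_zero' := by simp
  map_add' x y := by simp

theorem eq_transposeLeftMulMatrix {A : Matrix ι ι K} {x : F}
    (hA : ∀ i, ∑ k, A i k • b k = b i * x) : A = transposeLeftMulMatrix b x := by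
  ext i k
  rw [transposeLeftMulMatrix, RingHom.coe_mk, MonoidHom.coe_mk, OneHom.coe_mk, transpose_apply,
    leftMulMatrix_eq_repr_mul, mul_comm, ← hA i, ← b.equivFun_symm_apply, ← b.equivFun_apply,
    LinearEquiv.apply_symm_apply]

omit [Fintype ι] [DecidableEq ι] in
theorem traceMatrix_transpose : (traceMatrix K b)ᵀ = traceMatrix K b := by
  ext i j
  simp [mul_comm]

theorem traceMatrix_mul_leftMulMatrix_apply (x : F) (i j : ι) :
    (traceMatrix K b * leftMulMatrix b x) i j = trace K F (x * b j * b i) := by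
  rw [← congrFun (traceMatrix_of_basis_mulVec b (x * b j)) i, mul_apply, mulVec, dotProduct]
  simp [leftMulMatrix_eq_repr_mul]

/-- Multiplication by `x` is self-adjoint for the trace form. -/
theorem transposeLeftMulMatrix_mul_traceMatrix (x : F) :
    transposeLeftMulMatrix b x * traceMatrix K b =
      traceMatrix K b * (transposeLeftMulMatrix b x)ᵀ := by
  change (leftMulMatrix b x)ᵀ * _ = _ * (leftMulMatrix b x)ᵀᵀ
  rw [transpose_transpose, ← traceMatrix_transpose b, ← transpose_mul, traceMatrix_transpose]
  ext i j
  rw [transpose_apply, traceMatrix_mul_leftMulMatrix_apply, traceMatrix_mul_leftMulMatrix_apply]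
  ring_nf

end Algebra

section PSLAction

variable {K F n : Type*} [CommRing K] [CommRing F] [Fintype n] [DecidableEq n]
  (φ : F →+* Matrix n n K) (W : Matrix n n K)

/-- With `φ x = A_x²` this is the matrix `F` of the Möbius map `z ↦ (az+b)/(cz+d)`. -/
noncomputable def pslBlockMatrix (a b c d : F) : Matrix (n ⊕ n) (n ⊕ n) K :=
  fromBlocks (φ d) (φ b * W) (W⁻¹ * φ c) (φ a)ᵀ

variable {φ W}

theorem inv_mul_eq_transpose_mul_inv (hφW : ∀ x, φ x * W = W * (φ x)ᵀ) (hW : IsUnit W.det)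
    (x : F) : W⁻¹ * φ x = (φ x)ᵀ * W⁻¹ := by
  calc W⁻¹ * φ x = W⁻¹ * (φ x * W) * W⁻¹ := by
        rw [Matrix.mul_assoc, Matrix.mul_assoc, mul_nonsing_inv W hW, Matrix.mul_one]
    _ = (φ x)ᵀ * W⁻¹ := by rw [hφW, ← Matrix.mul_assoc, nonsing_inv_mul W hW, Matrix.one_mul]

theorem fromCols_one_mul_pslBlockMatrix (hφW : ∀ x, φ x * W = W * (φ x)ᵀ) (hW : IsUnit W.det)
    (a b c d z : F) :
    Matrix.fromCols (1 : Matrix n n K) (φ z * W) * pslBlockMatrix φ W a b c d =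
      Matrix.fromCols (φ (c * z + d)) (φ (a * z + b) * W) := by
  rw [pslBlockMatrix, fromCols_mul_fromBlocks, Matrix.one_mul, Matrix.one_mul,
    mul_assoc, ← mul_assoc W, mul_nonsing_inv W hW, Matrix.one_mul, mul_assoc, ← hφW, ← mul_assoc,
    ← map_mul, ← map_mul, ← Matrix.add_mul, ← map_add, ← map_add, add_comm d, add_comm b,
    mul_comm z, mul_comm z]

theorem pslBlockMatrix_mul_swap_mul_transpose [CharP K 2] (hφW : ∀ x, φ x * W = W * (φ x)ᵀ)
    (hWt : Wᵀ = W) (hW : IsUnit W.det) {a b c d : F} (h : a * d + b * c = 1) :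
    pslBlockMatrix φ W a b c d * fromBlocks 0 1 1 0 * (pslBlockMatrix φ W a b c d)ᵀ =
      fromBlocks 0 1 1 0 := by
  have hsymm : ∀ x, (φ x * W)ᵀ = φ x * W := fun x => by rw [transpose_mul, hWt, hφW]
  have hsymm' : ∀ x, (W⁻¹ * φ x)ᵀ = W⁻¹ * φ x := fun x => by
    rw [transpose_mul, transpose_nonsing_inv, hWt, inv_mul_eq_transpose_mul_inv hφW hW]
  simp only [pslBlockMatrix, fromBlocks_transpose, fromBlocks_multiply, hsymm, hsymm',
    transpose_transpose, Matrix.mul_zero, Matrix.mul_one, zero_add, add_zero]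
  have hdouble (M : Matrix n n K) : M + M = 0 := by
    rw [← two_smul K M, CharTwo.two_eq_zero, zero_smul]
  have hinv := inv_mul_eq_transpose_mul_inv hφW hW
  congr 1
  · rw [Matrix.mul_assoc, ← hφW, ← Matrix.mul_assoc, ← Matrix.mul_assoc (φ d), ← map_mul,
      ← map_mul, mul_comm d b, hdouble]
  · rw [Matrix.mul_assoc, ← Matrix.mul_assoc W, mul_nonsing_inv W hW, Matrix.one_mul, ← map_mul,
      ← map_mul, ← map_add, show b * c + d * a = 1 by linear_combination h, map_one]
  · rw [← transpose_mul, ← map_mul, Matrix.mul_assoc, ← Matrix.mul_assoc (φ c), ← map_mul,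
      ← Matrix.mul_assoc, hinv, Matrix.mul_assoc, nonsing_inv_mul W hW, Matrix.mul_one,
      ← transpose_add, ← map_add, show d * a + c * b = 1 by linear_combination h, map_one,
      transpose_one]
  · rw [← Matrix.mul_assoc, ← hinv, Matrix.mul_assoc, Matrix.mul_assoc, ← map_mul, ← map_mul,
      mul_comm a c, hdouble]

variable {F : Type*} [Field F]

theorem mul_add_ne_zero_of_mul_add_eq_zero {a b c d z : F} (hdet : a * d - b * c ≠ 0)
    (hz : c * z + d = 0) : a * z + b ≠ 0 := fun h0 =>
  hdet (by linear_combination a * hz - c * h0)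

variable {φ : F →+* Matrix n n K} {W : Matrix n n K}

theorem span_row_fromCols_one_mul_pslBlockMatrix (hφW : ∀ x, φ x * W = W * (φ x)ᵀ)
    (hW : IsUnit W.det) {a b c d z : F} (hz : c * z + d ≠ 0) :
    Submodule.span K (Set.range
        (Matrix.fromCols (1 : Matrix n n K) (φ z * W) * pslBlockMatrix φ W a b c d).row) =
      Submodule.span K (Set.range
        (Matrix.fromCols (1 : Matrix n n K) (φ ((a * z + b) / (c * z + d)) * W)).row) := by
  have hfactor : Matrix.fromCols (φ (c * z + d)) (φ (a * z + b) * W) =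
      φ (c * z + d) * Matrix.fromCols 1 (φ ((a * z + b) / (c * z + d)) * W) := by
    rw [mul_fromCols, Matrix.mul_one, ← Matrix.mul_assoc, ← map_mul, mul_div_cancel₀ _ hz]
  rw [fromCols_one_mul_pslBlockMatrix hφW hW, hfactor,
    span_range_row_mul_of_isUnit ((IsUnit.mk0 _ hz).map φ)]

theorem span_row_fromCols_one_mul_pslBlockMatrix_of_eq_zero (hφW : ∀ x, φ x * W = W * (φ x)ᵀ)
    (hW : IsUnit W.det) {a b c d z : F} (hdet : a * d - b * c ≠ 0) (hz : c * z + d = 0) :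
    Submodule.span K (Set.range
        (Matrix.fromCols (1 : Matrix n n K) (φ z * W) * pslBlockMatrix φ W a b c d).row) =
      Submodule.span K (Set.range (Matrix.fromCols (0 : Matrix n n K) (1 : Matrix n n K)).row) := by
  have hunit : IsUnit (φ (a * z + b) * W) :=
    ((IsUnit.mk0 _ (mul_add_ne_zero_of_mul_add_eq_zero hdet hz)).map φ).mul
      ((isUnit_iff_isUnit_det W).2 hW)
  have hfactor : Matrix.fromCols (φ (c * z + d)) (φ (a * z + b) * W) =
      (φ (a * z + b) * W) * Matrix.fromCols (0 : Matrix n n K) (1 : Matrix n n K) := by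
    rw [mul_fromCols, Matrix.mul_zero, Matrix.mul_one, hz, map_zero]
  rw [fromCols_one_mul_pslBlockMatrix hφW hW, hfactor, span_range_row_mul_of_isUnit hunit]

end PSLAction

theorem kerdock_psl_action_general
    (m : ℕ) (F : Type) [Field F] [Algebra (ZMod 2) F]
    (α : F) (bas : Module.Basis (Fin m) (ZMod 2) F)
    (hbas : ∀ i : Fin m, bas i = α ^ (i : ℕ))
    (W : Matrix (Fin m) (Fin m) (ZMod 2))
    (hW : ∀ i j, W i j = Algebra.trace (ZMod 2) F (α ^ (i : ℕ) * α ^ (j : ℕ)))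
    (Amul : F → Matrix (Fin m) (Fin m) (ZMod 2))
    (hAmul : ∀ (w : F) (v : Fin m → ZMod 2),
      (∑ i, Matrix.vecMul v (Amul w) i • α ^ (i : ℕ)) = (∑ i, v i • α ^ (i : ℕ)) * w)
    (a b c d : F) (habcd : a * d + b * c = 1)
    (Fmat : Matrix (Fin m ⊕ Fin m) (Fin m ⊕ Fin m) (ZMod 2))
    (hFmat : Fmat = Matrix.fromBlocks ((Amul d) ^ 2) ((Amul b) ^ 2 * W)
      (W⁻¹ * (Amul c) ^ 2) (((Amul a) ^ 2)ᵀ))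
    (G : F → Matrix (Fin m) (Fin m ⊕ Fin m) (ZMod 2))
    (hG : ∀ z : F, G z = Matrix.fromCols 1 ((Amul z) ^ 2 * W)) :
    Fmat * Matrix.fromBlocks 0 1 1 0 * Fmatᵀ = Matrix.fromBlocks 0 1 1 0 ∧
    ∀ z : F,
      (c * z + d ≠ 0 →
        Submodule.span (ZMod 2) (Set.range fun i => (G z * Fmat) i) =
          Submodule.span (ZMod 2)
            (Set.range fun i => G ((a * z + b) / (c * z + d)) i)) ∧
      (c * z + d = 0 →
        Submodule.span (ZMod 2) (Set.range fun i => (G z * Fmat) i) =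
          Submodule.span (ZMod 2) (Set.range fun i =>
            (Matrix.fromCols (0 : Matrix (Fin m) (Fin m) (ZMod 2))
              (1 : Matrix (Fin m) (Fin m) (ZMod 2))) i)) := by
  have : Module.Finite (ZMod 2) F := Module.Finite.of_basis bas
  have : Finite F := Module.finite_of_finite (ZMod 2)
  have : CharP F 2 := charP_of_injective_algebraMap' (ZMod 2) 2
  let φ := (Algebra.transposeLeftMulMatrix bas).comp (frobenius F 2)
  have hAmul_eq (w : F) : Amul w = Algebra.transposeLeftMulMatrix bas w :=
    Algebra.eq_transposeLeftMulMatrix bas fun i => by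
      simpa [hbas, single_one_vecMul] using hAmul w (Pi.single i 1)
  have hW_eq : W = Algebra.traceMatrix (ZMod 2) bas := by
    ext i j
    simp [hW, hbas]
  have hφW (x : F) : φ x * W = W * (φ x)ᵀ := by
    rw [hW_eq]
    exact Algebra.transposeLeftMulMatrix_mul_traceMatrix bas _
  have hWdet : IsUnit W.det :=
    (hW_eq ▸ Algebra.discr_not_zero_of_basis (ZMod 2) bas : W.det ≠ 0).isUnit
  have hsq (x : F) : Amul x ^ 2 = φ x := by
    rw [hAmul_eq, ← map_pow, ← frobenius_def]; rfl
  obtain rfl : Fmat = pslBlockMatrix φ W a b c d := by simp only [hFmat, hsq, pslBlockMatrix]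
  simp only [hG, hsq]
  refine ⟨pslBlockMatrix_mul_swap_mul_transpose hφW (hW_eq ▸ Algebra.traceMatrix_transpose bas)
    hWdet habcd, fun z => ⟨span_row_fromCols_one_mul_pslBlockMatrix hφW hWdet,
    span_row_fromCols_one_mul_pslBlockMatrix_of_eq_zero hφW hWdet
      (by rw [CharTwo.sub_eq_add, habcd]; exact one_ne_zero)⟩⟩

/-- For `a,b,c,d ∈ F_{2^m}` with `ad + bc = 1`, `c ≠ 0`, the matrix
`F = [[A_d², A_b² W],[W⁻¹ A_c², (A_a²)ᵀ]]` is symplectic, and right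
multiplication by `F` maps the row space of `[I | A_z² W]` to the row space of
`[I | A_{(az+b)/(cz+d)}² W]` (to that of `[0 | I]` when `cz + d = 0`). -/
theorem kerdock_psl_action
    (m : ℕ) (hm : 0 < m) (F : Type) [Field F] [Algebra (ZMod 2) F]
    (α : F) (bas : Module.Basis (Fin m) (ZMod 2) F)
    (hbas : ∀ i : Fin m, bas i = α ^ (i : ℕ))
    (hα : ∀ x : F, x ≠ 0 → ∃ k : ℕ, x = α ^ k)
    (W : Matrix (Fin m) (Fin m) (ZMod 2))
    (hW : ∀ i j, W i j = Algebra.trace (ZMod 2) F (α ^ (i : ℕ) * α ^ (j : ℕ)))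
    (Amul : F → Matrix (Fin m) (Fin m) (ZMod 2))
    (hAmul : ∀ (w : F) (v : Fin m → ZMod 2),
      (∑ i, Matrix.vecMul v (Amul w) i • α ^ (i : ℕ)) = (∑ i, v i • α ^ (i : ℕ)) * w)
    (a b c d : F) (habcd : a * d + b * c = 1) (hc : c ≠ 0)
    (Fmat : Matrix (Fin m ⊕ Fin m) (Fin m ⊕ Fin m) (ZMod 2))
    (hFmat : Fmat = Matrix.fromBlocks ((Amul d) ^ 2) ((Amul b) ^ 2 * W)
      (W⁻¹ * (Amul c) ^ 2) (((Amul a) ^ 2)ᵀ))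
    (G : F → Matrix (Fin m) (Fin m ⊕ Fin m) (ZMod 2))
    (hG : ∀ z : F, G z = Matrix.fromCols 1 ((Amul z) ^ 2 * W)) :
    Fmat * Matrix.fromBlocks 0 1 1 0 * Fmatᵀ = Matrix.fromBlocks 0 1 1 0 ∧
    ∀ z : F,
      (c * z + d ≠ 0 →
        Submodule.span (ZMod 2) (Set.range fun i => (G z * Fmat) i) =
          Submodule.span (ZMod 2)
            (Set.range fun i => G ((a * z + b) / (c * z + d)) i)) ∧
      (c * z + d = 0 →
        Submodule.span (ZMod 2) (Set.range fun i => (G z * Fmat) i) =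
          Submodule.span (ZMod 2) (Set.range fun i =>
            (Matrix.fromCols (0 : Matrix (Fin m) (Fin m) (ZMod 2))
              (1 : Matrix (Fin m) (Fin m) (ZMod 2))) i)) :=
  kerdock_psl_action_general m F α bas hbas W hW Amul hAmul a b c d habcd Fmat hFmat G hG
end
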